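/- arXiv:0804.2766 — 7 statements merged into one kernel-verified Lean document; each statement's English description precedes it below -/
import Mathlib

section
/- Let D ⊂ ℂ² be a bounded domain (nonempty, open and connected), let p ∈ D, and let (φ_j) be a sequence of automorphisms of D (bijective holomorphic self-maps of D with holomorphic inverse) such that φ_j(p) converges to a point p∞ in the boundary ∂D of D. Assume there is an open neighbourhood U of p∞ in ℂ² such that every holomorphic map from the open unit disc in ℂ into ℂ² whose image is contained in U ∩ ∂D is constant. Then the sequence (φ_j) converges locally uniformly on D to the constant map with value p∞. -/
/-!
Pass to an arbitrary ultrafilter `𝒰` finer than `atTop`. By Montel's theorem the maps `φ j`, which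
take values in the bounded set `D`, converge along `𝒰` locally uniformly on `D` to a holomorphic
map `h` with `h p = p∞ ∈ ∂D`. Then `h` maps all of `D` into `∂D` (Cartan): if `h x₁ ∈ D`, the
limit of the chain rule for `ψ j ∘ φ j = id` gives `det Dh(x₁) ≠ 0`; Hurwitz's theorem, applied on
complex lines to the nowhere vanishing Jacobians of the `φ j`, makes `det Dh` nowhere zero on `D`;
and then near `p` the maps `φ j` are so close to the invertible linear map `Dh(p)` that for large
`j` the image `φ j D ⊆ D` contains a fixed ball around `φ j p`, hence `p∞`.
Near a point where `h = p∞`, every complex line through it is mapped by `h` into `U ∩ ∂D`, so `h`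
is constant there; by connectedness `h ≡ p∞`. As the limit does not depend on `𝒰`, the `φ j`
converge to `p∞`.
-/

open Filter Metric Set Topology
open scoped NNReal

section LocallyUniform

variable {ι α β γ : Type*} [TopologicalSpace α] {F : ι → α → β} {f : α → β} {p : Filter ι}
  {s : Set α}

theorem Continuous.comp_tendstoLocallyUniformlyOn_of_continuousOn [UniformSpace β]
    [UniformSpace γ] {g : β → γ} (hg : Continuous g) (hF : TendstoLocallyUniformlyOn F f p s)
    (hf : ContinuousOn f s) : TendstoLocallyUniformlyOn (fun i => g ∘ F i) (g ∘ f) p s := by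
  rw [tendstoLocallyUniformlyOn_iff_forall_tendsto] at hF ⊢
  intro x hx
  have hf' : Tendsto (fun y : ι × α => f y.2) (p ×ˢ 𝓝[s] x) (𝓝 (f x)) :=
    (hf x hx).tendsto.comp tendsto_snd
  have hF' : Tendsto (fun y : ι × α => F y.1 y.2) (p ×ˢ 𝓝[s] x) (𝓝 (f x)) :=
    hf'.congr_uniformity (hF x hx)
  exact (((hg.tendsto _).comp hf').prodMk_nhds ((hg.tendsto _).comp hF')).mono_right
    (nhds_le_uniformity _)

theorem tendstoLocallyUniformlyOn_of_forall_ultrafilter [UniformSpace β] [LocallyCompactSpace α]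
    (hs : IsOpen s) (h : ∀ 𝒰 : Ultrafilter ι, ↑𝒰 ≤ p → TendstoLocallyUniformlyOn F f 𝒰 s) :
    TendstoLocallyUniformlyOn F f p s := by
  simp only [tendstoLocallyUniformlyOn_iff_forall_isCompact hs] at h ⊢
  exact fun K hKs hK u hu => mem_iff_ultrafilter.2 fun 𝒰 h𝒰 => h 𝒰 h𝒰 K hKs hK u hu

end LocallyUniform

theorem tendstoLocallyUniformlyOn_of_lipschitzOnWith {ι α β : Type*} [PseudoMetricSpace α]
    [PseudoMetricSpace β] {F : ι → α → β} {f : α → β} {p : Filter ι} [p.NeBot] {s : Set α}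
    (hlip : ∀ x ∈ s, ∃ K : ℝ≥0, ∃ t ∈ 𝓝 x, ∀ i, LipschitzOnWith K (F i) t)
    (hF : ∀ x ∈ s, Tendsto (fun i => F i x) p (𝓝 (f x))) : TendstoLocallyUniformlyOn F f p s := by
  refine Metric.tendstoLocallyUniformlyOn_iff.2 fun ε hε x hx => ?_
  obtain ⟨K, t, ht, hK⟩ := hlip x hx
  set δ := ε / (3 * (K + 1))
  have hδ : 0 < δ := by positivity
  have hKδ : K * δ < ε / 3 := by
    rw [mul_div_assoc', div_lt_div_iff₀ (by positivity) (by norm_num)]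
    nlinarith
  refine ⟨s ∩ (t ∩ ball x δ), inter_mem_nhdsWithin s (inter_mem ht (ball_mem_nhds x hδ)), ?_⟩
  filter_upwards [Metric.tendsto_nhds.1 (hF x hx) (ε / 3) (by positivity)] with i hi
  rintro y ⟨hys, hyt, hyx⟩
  have hxt := mem_of_mem_nhds ht
  have hyx' : K * dist y x < ε / 3 :=
    (mul_le_mul_of_nonneg_left (mem_ball.1 hyx).le K.2).trans_lt hKδ
  have hfy : dist (f y) (f x) ≤ K * dist y x :=
    le_of_tendsto ((hF y hys).dist (hF x hx))
      (Eventually.of_forall fun i => (hK i).dist_le_mul y hyt x hxt)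
  calc dist (f y) (F i y) ≤ dist (f y) (f x) + dist (f x) (F i x) + dist (F i x) (F i y) :=
        dist_triangle4 _ _ _ _
    _ < ε / 3 + ε / 3 + ε / 3 := by
        gcongr
        · linarith
        · rwa [dist_comm]
        · exact ((hK i).dist_le_mul x hxt y hyt).trans_lt (by rwa [dist_comm])
    _ = ε := by ring

theorem IsPreconnected.eq_of_forall_eventually_eq {α β : Type*} [TopologicalSpace α]
    [TopologicalSpace β] [T1Space β] {s : Set α} {g : α → β} {a : β} (hs : IsPreconnected s)
    (hso : IsOpen s) (hg : ContinuousOn g s) (hloc : ∀ x ∈ s, g x = a → ∀ᶠ y in 𝓝 x, g y = a)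
    {x₀ : α} (hx₀ : x₀ ∈ s) (ha : g x₀ = a) : ∀ x ∈ s, g x = a := by
  have hsub : s ⊆ {x | ∀ᶠ y in 𝓝 x, g y = a} := by
    refine hs.subset_of_closure_inter_subset isOpen_setOfPred_eventually_nhds
      ⟨x₀, hx₀, hloc x₀ hx₀ ha⟩ fun x ⟨hxu, hxs⟩ => hloc x hxs ?_
    by_contra hne
    obtain ⟨y, hy, hyu⟩ := mem_closure_iff_nhds.1 hxu _
      ((hg.continuousAt (hso.mem_nhds hxs)).eventually_ne hne)
    exact hy hyu.self_of_nhds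
  exact fun x hx => (hsub hx).self_of_nhds

section Holomorphic

variable {E F : Type*} [NormedAddCommGroup E] [NormedSpace ℂ E] [NormedAddCommGroup F]
  [NormedSpace ℂ F]

theorem norm_fderiv_le_of_forall_norm_le {f : E → F} {c : E} {r M : ℝ}
    (hf : DifferentiableOn ℂ f (ball c r)) (hr : 0 < r) (hM : ∀ y ∈ ball c r, ‖f y‖ ≤ M) :
    ‖fderiv ℂ f c‖ ≤ 2 * M / r := by
  refine Complex.norm_fderiv_le_div_of_mapsTo_ball hf (fun y hy => ?_) hr
  have := hM c (mem_ball_self hr)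
  exact mem_closedBall.2 ((dist_le_norm_add_norm _ _).trans (by linarith [hM y hy]))

theorem exists_tendstoLocallyUniformlyOn_of_norm_le [ProperSpace F] {ι : Type*}
    (𝒰 : Ultrafilter ι) {f : ι → E → F} {s : Set E} (hs : IsOpen s)
    (hf : ∀ i, DifferentiableOn ℂ (f i) s) {M : ℝ} (hM : ∀ i, ∀ x ∈ s, ‖f i x‖ ≤ M) :
    ∃ g, TendstoLocallyUniformlyOn f g 𝒰 s := by
  refine ⟨fun x => limUnder (𝒰 : Filter ι) (fun i => f i x),
    tendstoLocallyUniformlyOn_of_lipschitzOnWith (fun x hx => ?_) (fun x hx => ?_)⟩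
  · obtain ⟨r, hr, hrs⟩ := Metric.isOpen_iff.1 hs x hx
    refine ⟨Real.toNNReal (4 * M / r), ball x (r / 2), ball_mem_nhds x (by positivity), fun i => ?_⟩
    have hsub : ∀ y ∈ ball x (r / 2), ball y (r / 2) ⊆ s := fun y hy =>
      (ball_subset_ball' (by linarith [mem_ball.1 hy])).trans hrs
    refine (convex_ball x (r / 2)).lipschitzOnWith_of_nnnorm_fderiv_le (𝕜 := ℂ)
      (fun y hy => (hf i).differentiableAt
        (hs.mem_nhds (hsub y hy (mem_ball_self (by positivity)))))
      (fun y hy => ?_)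
    rw [← NNReal.coe_le_coe, coe_nnnorm, Real.coe_toNNReal']
    refine le_max_of_le_left ((norm_fderiv_le_of_forall_norm_le ((hf i).mono (hsub y hy))
      (by positivity) fun z hz => hM i z (hsub y hy hz)).trans_eq (by ring))
  · refine tendsto_nhds_limUnder ?_
    obtain ⟨a, -, ha⟩ := (isCompact_closedBall (0 : F) M).ultrafilter_le_nhds
      (𝒰.map fun i => f i x)
      (by
        rw [Ultrafilter.coe_map, le_principal_iff]
        exact mem_map.2 <| univ_mem' fun i =>
          (mem_closedBall_zero_iff.2 (hM i x hx) : f i x ∈ closedBall 0 M))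
    exact ⟨a, ha⟩

theorem UniformCauchySeqOn.fderiv_ball {ι : Type*} {l : Filter ι} {f : ι → E → F} {x : E} {r : ℝ}
    (hr : 0 < r)
    (hC : UniformCauchySeqOn f l (ball x (2 * r)))
    (hf : ∀ᶠ i in l, DifferentiableOn ℂ (f i) (ball x (2 * r))) :
    UniformCauchySeqOn (fun i => fderiv ℂ (f i)) l (ball x r) := by
  intro u hu
  obtain ⟨ε, hε, hεu⟩ := Metric.mem_uniformity_dist.1 hu
  filter_upwards [hC _ (Metric.dist_mem_uniformity (show 0 < ε * r / 4 by positivity)),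
    hf.prod_mk hf] with ij hij hd y hy
  have hsub : ball y r ⊆ ball x (2 * r) := ball_subset_ball' (by linarith [mem_ball.1 hy])
  have hd' := (hd.1.sub hd.2).mono hsub
  have hy' : ball x (2 * r) ∈ 𝓝 y := isOpen_ball.mem_nhds (hsub (mem_ball_self hr))
  apply hεu
  rw [dist_eq_norm, ← fderiv_sub (hd.1.differentiableAt hy') (hd.2.differentiableAt hy')]
  calc ‖fderiv ℂ (fun z => f ij.1 z - f ij.2 z) y‖ ≤ 2 * (ε * r / 4) / r :=
        norm_fderiv_le_of_forall_norm_le hd' hr fun z hz => by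
          simpa [dist_eq_norm] using (hij z (hsub hz)).le
    _ < ε := by field_simp; linarith

theorem TendstoLocallyUniformlyOn.differentiableOn_and_fderiv [ProperSpace E] [CompleteSpace F]
    {ι : Type*} {l : Filter ι} [l.NeBot] {f : ι → E → F} {g : E → F} {s : Set E}
    (hfg : TendstoLocallyUniformlyOn f g l s)
    (hf : ∀ᶠ i in l, DifferentiableOn ℂ (f i) s) (hs : IsOpen s) :
    DifferentiableOn ℂ g s ∧
      TendstoLocallyUniformlyOn (fun i => fderiv ℂ (f i)) (fderiv ℂ g) l s := by
  have hloc : ∀ x ∈ s, ∃ r > 0, ball x r ⊆ s ∧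
      UniformCauchySeqOn (fun i => fderiv ℂ (f i)) l (ball x r) := by
    intro x hx
    obtain ⟨ε, hε, hεs⟩ := Metric.isOpen_iff.1 hs x hx
    have hsub : closedBall x (2 * (ε / 4)) ⊆ s :=
      (closedBall_subset_ball (by linarith)).trans hεs
    have hunif := (tendstoLocallyUniformlyOn_iff_forall_isCompact hs).1 hfg _ hsub
      (isCompact_closedBall _ _)
    refine ⟨ε / 4, by positivity, (ball_subset_ball (by linarith)).trans hεs,
      (hunif.mono ball_subset_closedBall).uniformCauchySeqOn.fderiv_ball (by positivity)
        (hf.mono fun i hi => hi.mono (ball_subset_closedBall.trans hsub))⟩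
  set Φ := fun x => limUnder l (fun i => fderiv ℂ (f i) x)
  have hΦ : ∀ x ∈ s, Tendsto (fun i => fderiv ℂ (f i) x) l (𝓝 (Φ x)) := fun x hx => by
    obtain ⟨r, hr, -, hC⟩ := hloc x hx
    exact tendsto_nhds_limUnder (cauchy_map_iff_exists_tendsto.1 (hC.cauchy_map (mem_ball_self hr)))
  have hTLU : TendstoLocallyUniformlyOn (fun i => fderiv ℂ (f i)) Φ l s :=
    tendstoLocallyUniformlyOn_of_forall_exists_nhds fun x hx => by
      obtain ⟨r, hr, hrs, hC⟩ := hloc x hx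
      exact ⟨ball x r, mem_nhdsWithin_of_mem_nhds (ball_mem_nhds x hr),
        hC.tendstoUniformlyOn_of_tendsto fun y hy => hΦ y (hrs hy)⟩
  have hderiv : ∀ x ∈ s, HasFDerivAt g (Φ x) x := fun x hx =>
    hasFDerivAt_of_tendstoUniformlyOnFilter
      (by simpa [hs.nhdsWithin_eq hx] using tendstoLocallyUniformlyOn_iff_filter.1 hTLU x hx)
      (by
        filter_upwards [hf.prod_mk (hs.mem_nhds hx)] with iy hiy
        exact (hiy.1.differentiableAt (hs.mem_nhds hiy.2)).hasFDerivAt)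
      (by filter_upwards [hs.mem_nhds hx] with y hy using hfg.tendsto_at hy)
  exact ⟨fun x hx => (hderiv x hx).differentiableAt.differentiableWithinAt,
    hTLU.congr_right fun x hx => (hderiv x hx).fderiv.symm⟩

theorem norm_dslope_sub_deriv_le [CompleteSpace F] {q : ℂ → F} {c t : ℂ} {R M : ℝ}
    (hq : DifferentiableOn ℂ q (ball c R)) (hM : MapsTo q (ball c R) (closedBall (q c) M))
    (ht : t ∈ ball c R) : ‖dslope q c t - deriv q c‖ ≤ 2 * M / R ^ 2 * dist t c := by
  have hR : 0 < R := pos_of_mem_ball ht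
  have hd : DifferentiableOn ℂ (dslope q c) (ball c R) :=
    (Complex.differentiableOn_dslope (ball_mem_nhds c hR)).2 hq
  have hmaps : MapsTo (dslope q c) (ball c R) (closedBall (dslope q c c) (2 * M / R)) :=
    fun z hz => by
      have h₁ := Complex.norm_dslope_le_div_of_mapsTo_ball hq hM hz
      have h₂ := Complex.norm_dslope_le_div_of_mapsTo_ball hq hM (mem_ball_self hR)
      have h₃ : 2 * M / R = M / R + M / R := by ring
      exact mem_closedBall.2 ((dist_le_norm_add_norm _ _).trans (by linarith))
  rw [← dist_eq_norm, ← dslope_same]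
  calc _ ≤ 2 * M / R / R * dist t c := Complex.dist_le_div_mul_dist_of_mapsTo_ball hd hmaps ht
    _ = _ := by ring

theorem norm_dslope_sub_fderiv_le [CompleteSpace F] {f : E → F} {x v : E} {ρ M : ℝ} {t : ℂ}
    (hf : DifferentiableOn ℂ (fun μ : ℂ => f (x + μ • v)) (ball 0 ρ))
    (hfx : DifferentiableAt ℂ f x)
    (hM : MapsTo (fun μ : ℂ => f (x + μ • v)) (ball 0 ρ) (closedBall (f x) M))
    (ht : t ∈ ball 0 ρ) :
    ‖dslope (fun μ : ℂ => f (x + μ • v)) 0 t - fderiv ℂ f x v‖ ≤ 2 * M / ρ ^ 2 * ‖t‖ := by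
  have hderiv : HasDerivAt (fun μ : ℂ => f (x + μ • v)) (fderiv ℂ f x v) 0 :=
    hfx.hasFDerivAt.comp_hasDerivAt_of_eq (x := 0)
      (by simpa using ((hasDerivAt_id (0 : ℂ)).smul_const v).const_add x) (by simp)
  simpa [hderiv.deriv] using norm_dslope_sub_deriv_le hf (by simpa using hM) ht

theorem DifferentiableOn.differentiableOn_fderiv_apply [ProperSpace E] [CompleteSpace F]
    {f : E → F} {s : Set E} (hf : DifferentiableOn ℂ f s) (hs : IsOpen s) (v : E) :
    DifferentiableOn ℂ (fun x => fderiv ℂ f x v) s := by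
  rcases eq_or_ne v 0 with rfl | hv
  · simp
  intro y hy
  obtain ⟨ε, hε, hεs⟩ : ∃ ε > 0, ball y ε ⊆ s ∩ f ⁻¹' ball (f y) 1 :=
    Metric.mem_nhds_iff.1 (inter_mem (hs.mem_nhds hy)
      (hf.continuousOn.continuousAt (hs.mem_nhds hy) (ball_mem_nhds _ one_pos)))
  set ρ := ε / 2 / ‖v‖
  have hρ : 0 < ρ := by positivity
  have hmem : ∀ x ∈ ball y (ε / 2), ∀ μ ∈ ball (0 : ℂ) ρ, x + μ • v ∈ ball y ε := by
    intro x hx μ hμ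
    rw [mem_ball_zero_iff] at hμ
    have : ‖μ • v‖ < ε / 2 := by
      rw [norm_smul]; exact (lt_div_iff₀ (norm_pos_iff.2 hv)).1 hμ
    rw [mem_ball, dist_eq_norm, add_sub_right_comm]
    linarith [norm_add_le (x - y) (μ • v), mem_ball_iff_norm.1 hx]
  have hys : ball y ε ⊆ s := fun z hz => (hεs hz).1
  set Q : ℂ → E → F := fun t x => dslope (fun μ : ℂ => f (x + μ • v)) 0 t
  have hQ : ∀ x ∈ ball y (ε / 2), ∀ t ∈ ball (0 : ℂ) ρ,
      ‖Q t x - fderiv ℂ f x v‖ ≤ 2 * 2 / ρ ^ 2 * ‖t‖ := by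
    intro x hx t ht
    refine norm_dslope_sub_fderiv_le
      ((hf.mono hys).comp (by fun_prop : Differentiable ℂ fun μ : ℂ => x + μ • v).differentiableOn
        (hmem x hx))
      (hf.differentiableAt (hs.mem_nhds (hys (by simpa using hmem x hx 0 (mem_ball_self hρ)))))
      (fun μ hμ => ?_) ht
    have h₁ := mem_ball.1 (hεs (hmem x hx μ hμ)).2
    have h₂ := mem_ball.1 (hεs (by simpa using hmem x hx 0 (mem_ball_self hρ))).2
    exact mem_closedBall.2 ((dist_triangle_right _ _ (f y)).trans (by linarith))
  have hconv : TendstoUniformlyOn Q (fun x => fderiv ℂ f x v) (𝓝[≠] 0) (ball y (ε / 2)) := by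
    refine Metric.tendstoUniformlyOn_iff.2 fun δ hδ => ?_
    have hsmall : ∀ᶠ t in 𝓝 (0 : ℂ), 2 * 2 / ρ ^ 2 * ‖t‖ < δ :=
      ((continuous_const.mul continuous_norm).tendsto' (0 : ℂ) 0 (by simp)).eventually
        (gt_mem_nhds hδ)
    filter_upwards [nhdsWithin_le_nhds (inter_mem (ball_mem_nhds 0 hρ) hsmall)] with t ht x hx
    rw [dist_comm, dist_eq_norm]
    exact (hQ x hx t ht.1).trans_lt ht.2
  have hQd : ∀ᶠ t in 𝓝[≠] (0 : ℂ), DifferentiableOn ℂ (Q t) (ball y (ε / 2)) := by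
    filter_upwards [self_mem_nhdsWithin, nhdsWithin_le_nhds (ball_mem_nhds 0 hρ)] with t ht₀ ht
    have hshift : DifferentiableOn ℂ (fun x => f (x + t • v)) (ball y (ε / 2)) :=
      (hf.mono hys).comp (by fun_prop : Differentiable ℂ fun x : E => x + t • v).differentiableOn
        fun x hx => hmem x hx t ht
    have hself : DifferentiableOn ℂ f (ball y (ε / 2)) :=
      hf.mono ((ball_subset_ball (by linarith)).trans hys)
    simp only [Q, dslope_of_ne _ (show t ≠ 0 from ht₀), slope_def_module, sub_zero, zero_smul,
      add_zero]
    exact (hshift.sub hself).const_smul _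
  exact ((hconv.tendstoLocallyUniformlyOn.differentiableOn_and_fderiv hQd isOpen_ball).1
    y (mem_ball_self (by positivity))).mono_of_mem_nhdsWithin
      (mem_nhdsWithin_of_mem_nhds (ball_mem_nhds y (by positivity)))

theorem DifferentiableOn.continuousOn_fderiv [FiniteDimensional ℂ E] [CompleteSpace F]
    {f : E → F} {s : Set E} (hf : DifferentiableOn ℂ f s) (hs : IsOpen s) :
    ContinuousOn (fderiv ℂ f) s :=
  continuousOn_clm_apply.2 fun v => (hf.differentiableOn_fderiv_apply hs v).continuousOn

theorem add_two_mul_smul_sub_mem_ball {x y : E} {δ : ℝ} (hy : y ∈ ball x (δ / 2)) {ζ : ℂ}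
    (hζ : ζ ∈ ball (0 : ℂ) 1) : x + (2 * ζ) • (y - x) ∈ ball x δ := by
  rw [mem_ball_zero_iff] at hζ
  rw [mem_ball_iff_norm] at hy
  rw [mem_ball_iff_norm, add_sub_cancel_left, norm_smul, norm_mul, Complex.norm_ofNat]
  nlinarith [norm_nonneg ζ, norm_nonneg (y - x)]

theorem TendstoLocallyUniformlyOn.eqOn_zero_of_forall_ne_zero {ι : Type*} {l : Filter ι}
    [l.NeBot] {u : ι → ℂ → ℂ} {g : ℂ → ℂ} {U : Set ℂ} (hug : TendstoLocallyUniformlyOn u g l U)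
    (hu : ∀ i, DifferentiableOn ℂ (u i) U) (hne : ∀ i, ∀ z ∈ U, u i z ≠ 0) (hU : IsOpen U)
    (hUc : IsPreconnected U) {z₀ : ℂ} (hz₀ : z₀ ∈ U) (hg : g z₀ = 0) : EqOn g 0 U := by
  have hgd := hug.differentiableOn (Eventually.of_forall hu) hU
  have han := hgd.analyticOnNhd hU
  refine han.eqOn_zero_of_preconnected_of_eventuallyEq_zero hUc hz₀
    ((han z₀ hz₀).eventually_eq_zero_or_eventually_ne_zero.resolve_right fun hiso => ?_)
  obtain ⟨r, hr, hrU, hgr⟩ : ∃ r > 0, closedBall z₀ r ⊆ U ∧ ∀ z ∈ sphere z₀ r, g z ≠ 0 := by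
    obtain ⟨ε, hε, hεU⟩ := Metric.mem_nhds_iff.1
      (inter_mem (hU.mem_nhds hz₀) (eventually_nhdsWithin_iff.1 hiso))
    have hsub : closedBall z₀ (ε / 2) ⊆ ball z₀ ε := closedBall_subset_ball (by linarith)
    exact ⟨ε / 2, by positivity, fun z hz => (hεU (hsub hz)).1, fun z hz =>
      (hεU (hsub (sphere_subset_closedBall hz))).2 (ne_of_mem_sphere hz (half_pos hε).ne')⟩
  obtain ⟨z₁, hz₁, hmin⟩ := (isCompact_sphere z₀ r).exists_isMinOn
    (NormedSpace.sphere_nonempty.2 hr.le)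
    (hgd.continuousOn.mono (sphere_subset_closedBall.trans hrU)).norm
  set m := ‖g z₁‖
  have hm : 0 < m := norm_pos_iff.2 (hgr z₁ hz₁)
  have hunif := (tendstoLocallyUniformlyOn_iff_forall_isCompact hU).1 hug _
    (sphere_subset_closedBall.trans hrU) (isCompact_sphere z₀ r)
  obtain ⟨i, hi₁, hi₂⟩ := ((Metric.tendstoUniformlyOn_iff.1 hunif (m / 2) (by positivity)).and
    (Metric.tendsto_nhds.1 (hug.tendsto_at hz₀) (m / 2) (by positivity))).exists
  rw [hg, dist_zero_right] at hi₂
  -- the maximum principle for `1 / u i` forces `‖u i z₀‖ ≥ m / 2`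
  have hinv : DiffContOnCl ℂ (fun z => (u i z)⁻¹) (ball z₀ r) :=
    (((hu i).inv (hne i)).mono (by rwa [closure_ball z₀ hr.ne'])).diffContOnCl
  have hbound : ∀ z ∈ frontier (ball z₀ r), ‖(u i z)⁻¹‖ ≤ (m / 2)⁻¹ := by
    rw [frontier_ball z₀ hr.ne']
    intro z hz
    have h₁ : m ≤ ‖g z‖ := hmin hz
    have h₂ := hi₁ z hz
    rw [dist_eq_norm] at h₂
    rw [norm_inv]
    exact inv_anti₀ (by positivity) (by linarith [norm_sub_norm_le (g z) (u i z)])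
  have := Complex.norm_le_of_forall_mem_frontier_norm_le isBounded_ball hinv hbound
    (subset_closure (mem_ball_self hr))
  rw [norm_inv, inv_le_inv₀ (norm_pos_iff.2 (hne i z₀ hz₀)) (by positivity)] at this
  linarith

theorem TendstoLocallyUniformlyOn.forall_ne_zero_of_ne_zero {ι : Type*} {l : Filter ι} [l.NeBot]
    {u : ι → E → ℂ} {g : E → ℂ} {s : Set E} (hug : TendstoLocallyUniformlyOn u g l s)
    (hu : ∀ i, DifferentiableOn ℂ (u i) s) (hne : ∀ i, ∀ x ∈ s, u i x ≠ 0) (hs : IsOpen s)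
    (hsc : IsPreconnected s) {x₁ : E} (hx₁ : x₁ ∈ s) (hgx₁ : g x₁ ≠ 0) : ∀ x ∈ s, g x ≠ 0 := by
  intro x hx hgx
  refine hgx₁ (hsc.eq_of_forall_eventually_eq hs
    (hug.continuousOn (Frequently.of_forall fun i => (hu i).continuousOn)) (fun y hy hgy => ?_)
    hx hgx x₁ hx₁)
  obtain ⟨δ, hδ, hδs⟩ := Metric.isOpen_iff.1 hs y hy
  filter_upwards [ball_mem_nhds y (half_pos hδ)] with z hz
  set L : ℂ → E := fun ζ => y + (2 * ζ) • (z - y)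
  have hL : MapsTo L (ball 0 1) s := fun ζ hζ => hδs (add_two_mul_smul_sub_mem_ball hz hζ)
  have hLd : Differentiable ℂ L := by fun_prop
  have := (hug.comp L hL hLd.continuous.continuousOn).eqOn_zero_of_forall_ne_zero
    (fun i => (hu i).comp hLd.differentiableOn hL) (fun i ζ hζ => hne i _ (hL hζ)) isOpen_ball
    (convex_ball 0 1).isPreconnected (mem_ball_self one_pos) (by simpa [L] using hgy)
    (show (1 / 2 : ℂ) ∈ ball (0 : ℂ) 1 by rw [mem_ball_zero_iff]; norm_num)
  norm_num [L] at this
  exact this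

theorem TendstoLocallyUniformlyOn.eventually_closedBall_subset_image [CompleteSpace E]
    [Nontrivial E] {ι : Type*} {l : Filter ι} {f : ι → E → F}
    {Φ : E → E →L[ℂ] F} {s : Set E} {p : E}
    (hΦ : TendstoLocallyUniformlyOn (fun i => fderiv ℂ (f i)) Φ l s)
    (hf : ∀ i, DifferentiableOn ℂ (f i) s) (hs : IsOpen s) (hp : p ∈ s) (hΦp : ContinuousAt Φ p)
    (e : E ≃L[ℂ] F) (he : Φ p = e) : ∃ ρ > 0, ∀ᶠ i in l, closedBall (f i p) ρ ⊆ f i '' s := by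
  set N : ℝ≥0 := ‖(e.symm : F →L[ℂ] E)‖₊
  have hN : 0 < N := by
    obtain ⟨x, hx⟩ := exists_ne (0 : E)
    refine nnnorm_pos.2 fun h0 => hx ?_
    simpa using congrArg (fun T : F →L[ℂ] E => T (e x)) h0
  set c : ℝ≥0 := N⁻¹ / 2
  have hc : (0 : ℝ) < c := by positivity
  obtain ⟨t, ht, hev⟩ := Metric.tendstoLocallyUniformlyOn_iff.1 hΦ (c / 2) (half_pos hc) p hp
  rw [hs.nhdsWithin_eq hp] at ht
  have hnear : ∀ᶠ y in 𝓝 p, dist (Φ y) e < c / 2 :=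
    he ▸ hΦp.eventually (ball_mem_nhds _ (half_pos hc))
  obtain ⟨r, hr, hrsub⟩ := Metric.nhds_basis_closedBall.mem_iff.1
    (inter_mem (inter_mem (hs.mem_nhds hp) ht) hnear)
  refine ⟨c * r, by positivity, ?_⟩
  filter_upwards [hev] with i hi
  have hdiff : ∀ z ∈ closedBall p r, DifferentiableAt ℂ (f i) z :=
    fun z hz => (hf i).differentiableAt (hs.mem_nhds (hrsub hz).1.1)
  have happrox : ApproximatesLinearOn (f i) (e : E →L[ℂ] F) (closedBall p r) c := by
    refine LipschitzOnWith.approximatesLinearOn <|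
      (convex_closedBall p r).lipschitzOnWith_of_nnnorm_fderiv_le (𝕜 := ℂ)
        (fun z hz => (hdiff z hz).sub (e : E →L[ℂ] F).differentiableAt) fun z hz => ?_
    rw [fderiv_sub (hdiff z hz) (e : E →L[ℂ] F).differentiableAt, ContinuousLinearMap.fderiv,
      ← NNReal.coe_le_coe, coe_nnnorm, ← dist_eq_norm]
    have h₁ := hi z (hrsub hz).1.2
    have h₂ : dist (Φ z) e < c / 2 := (hrsub hz).2
    linarith [dist_triangle (fderiv ℂ (f i) z) (Φ z) e, dist_comm (fderiv ℂ (f i) z) (Φ z)]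
  have hsurj := happrox.surjOn_closedBall_of_nonlinearRightInverse e.toNonlinearRightInverse
    hr.le subset_rfl
  have hρ : ((e.toNonlinearRightInverse.nnnorm : ℝ)⁻¹ - c) * r = c * r := by
    change ((N : ℝ)⁻¹ - (N⁻¹ / 2 : ℝ≥0)) * r = (N⁻¹ / 2 : ℝ≥0) * r
    push_cast; ring
  rw [hρ] at hsurj
  exact hsurj.mono (fun z hz => (hrsub hz).1.1) subset_rfl

def HasNoNonconstantHolomorphicDisc (V : Set F) : Prop :=
  ∀ f : ℂ → F, DifferentiableOn ℂ f (ball 0 1) → f '' ball 0 1 ⊆ V →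
    ∀ z ∈ ball (0 : ℂ) 1, ∀ w ∈ ball (0 : ℂ) 1, f z = f w

theorem HasNoNonconstantHolomorphicDisc.eq_of_mem_ball {V : Set F}
    (hV : HasNoNonconstantHolomorphicDisc V) {h : E → F} {x : E} {δ : ℝ}
    (hh : DifferentiableOn ℂ h (ball x δ)) (hmaps : MapsTo h (ball x δ) V) :
    ∀ y ∈ ball x (δ / 2), h y = h x := by
  intro y hy
  set L : ℂ → E := fun ζ => x + (2 * ζ) • (y - x)
  have hL : MapsTo L (ball 0 1) (ball x δ) := fun ζ hζ => add_two_mul_smul_sub_mem_ball hy hζ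
  have := hV (h ∘ L) (hh.comp (by fun_prop : Differentiable ℂ L).differentiableOn hL)
    (image_subset_iff.2 (hmaps.comp hL)) (1 / 2) (by rw [mem_ball_zero_iff]; norm_num) 0
    (mem_ball_self one_pos)
  norm_num [L] at this
  exact this

theorem HasNoNonconstantHolomorphicDisc.eq_of_mapsTo {U W : Set F}
    (hV : HasNoNonconstantHolomorphicDisc (U ∩ W)) (hU : IsOpen U) {h : E → F} {s : Set E}
    (hs : IsOpen s) (hsc : IsPreconnected s) (hh : DifferentiableOn ℂ h s) (hmaps : MapsTo h s W)
    {x₀ : E} (hx₀ : x₀ ∈ s) (hU₀ : h x₀ ∈ U) : ∀ x ∈ s, h x = h x₀ := by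
  refine hsc.eq_of_forall_eventually_eq hs hh.continuousOn (fun x hx hhx => ?_) hx₀ rfl
  obtain ⟨δ, hδ, hδs⟩ := Metric.mem_nhds_iff.1 (inter_mem (hs.mem_nhds hx)
    (hh.continuousOn.continuousAt (hs.mem_nhds hx) (hU.mem_nhds (hhx ▸ hU₀))))
  filter_upwards [ball_mem_nhds x (half_pos hδ)] with y hy
  exact (hV.eq_of_mem_ball (hh.mono fun z hz => (hδs hz).1)
    (fun z hz => ⟨(hδs hz).2, hmaps (hδs hz).1⟩) y hy).trans hhx

end Holomorphic

theorem ContinuousLinearMap.det_prod_eq {R : Type*} [CommRing R] [TopologicalSpace R]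
    (T : R × R →L[R] R × R) :
    T.det = (T (1, 0)).1 * (T (0, 1)).2 - (T (0, 1)).1 * (T (1, 0)).2 := by
  rw [ContinuousLinearMap.det, ← LinearMap.det_toMatrix (Module.Basis.finTwoProd R),
    Matrix.det_fin_two]
  simp [LinearMap.toMatrix_apply]

theorem DifferentiableOn.differentiableOn_det_fderiv {f : ℂ × ℂ → ℂ × ℂ} {s : Set (ℂ × ℂ)}
    (hf : DifferentiableOn ℂ f s) (hs : IsOpen s) :
    DifferentiableOn ℂ (fun x => (fderiv ℂ f x).det) s := by
  simp only [ContinuousLinearMap.det_prod_eq]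
  have h₁ := hf.differentiableOn_fderiv_apply hs (1, 0)
  have h₂ := hf.differentiableOn_fderiv_apply hs (0, 1)
  exact (h₁.fst.mul h₂.snd).sub (h₂.fst.mul h₁.snd)

theorem det_fderiv_mul_det_fderiv_of_leftInvOn {𝕜 E : Type*} [NontriviallyNormedField 𝕜]
    [NormedAddCommGroup E] [NormedSpace 𝕜 E] {φ ψ : E → E} {s : Set E} {x : E}
    (hψφ : LeftInvOn ψ φ s) (hs : s ∈ 𝓝 x) (hφ : DifferentiableAt 𝕜 φ x)
    (hψ : DifferentiableAt 𝕜 ψ (φ x)) : (fderiv 𝕜 ψ (φ x)).det * (fderiv 𝕜 φ x).det = 1 := by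
  have h := (eventuallyEq_of_mem hs fun y hy => hψφ hy : ψ ∘ φ =ᶠ[𝓝 x] id).fderiv_eq (𝕜 := 𝕜)
  rw [fderiv_comp x hψ hφ, fderiv_id] at h
  simpa [ContinuousLinearMap.det, ← LinearMap.det_comp] using congrArg ContinuousLinearMap.det h

theorem apply_notMem_of_tendstoLocallyUniformlyOn {ι : Type*} (𝒰 : Ultrafilter ι)
    {D : Set (ℂ × ℂ)} (hDo : IsOpen D) (hDc : IsPreconnected D) {M : ℝ}
    (hM : ∀ x ∈ D, ‖x‖ ≤ M) {φ ψ : ι → ℂ × ℂ → ℂ × ℂ} (hφ : ∀ i, DifferentiableOn ℂ (φ i) D)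
    (hφD : ∀ i, MapsTo (φ i) D D) (hψ : ∀ i, DifferentiableOn ℂ (ψ i) D)
    (hψD : ∀ i, MapsTo (ψ i) D D) (hψφ : ∀ i, LeftInvOn (ψ i) (φ i) D)
    {h : ℂ × ℂ → ℂ × ℂ} (hφh : TendstoLocallyUniformlyOn φ h 𝒰 D) {p : ℂ × ℂ} (hp : p ∈ D)
    (hhp : h p ∉ D) : ∀ x ∈ D, h x ∉ D := by
  intro x₁ hx₁ hhx₁
  obtain ⟨g, hψg⟩ :=
    exists_tendstoLocallyUniformlyOn_of_norm_le 𝒰 hDo hψ fun i x hx => hM _ (hψD i hx)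
  obtain ⟨hh, hφ'⟩ := hφh.differentiableOn_and_fderiv (Eventually.of_forall hφ) hDo
  obtain ⟨hg, hψ'⟩ := hψg.differentiableOn_and_fderiv (Eventually.of_forall hψ) hDo
  have hJφ := ContinuousLinearMap.continuous_det.comp_tendstoLocallyUniformlyOn_of_continuousOn
    hφ' (hh.continuousOn_fderiv hDo)
  have hJψ := ContinuousLinearMap.continuous_det.comp_tendstoLocallyUniformlyOn_of_continuousOn
    hψ' (hg.continuousOn_fderiv hDo)
  have hdet : ∀ i, ∀ x ∈ D, (fderiv ℂ (ψ i) (φ i x)).det * (fderiv ℂ (φ i) x).det = 1 :=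
    fun i x hx => det_fderiv_mul_det_fderiv_of_leftInvOn (hψφ i) (hDo.mem_nhds hx)
      ((hφ i).differentiableAt (hDo.mem_nhds hx))
      ((hψ i).differentiableAt (hDo.mem_nhds (hφD i hx)))
  have hφx₁ : Tendsto (fun i => φ i x₁) 𝒰 (𝓝[D] (h x₁)) :=
    tendsto_nhdsWithin_iff.2 ⟨hφh.tendsto_at hx₁, Eventually.of_forall fun i => hφD i hx₁⟩
  -- passing to the limit in the chain rule for `ψ i ∘ φ i = id` at `x₁`
  have hone : (fderiv ℂ g (h x₁)).det * (fderiv ℂ h x₁).det = 1 :=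
    tendsto_nhds_unique ((hJψ.tendsto_comp
      ((ContinuousLinearMap.continuous_det.comp_continuousOn (hg.continuousOn_fderiv hDo)) _ hhx₁)
      hhx₁ hφx₁).mul (hJφ.tendsto_at hx₁))
      (tendsto_const_nhds.congr fun i => (hdet i x₁ hx₁).symm)
  have hJne : ∀ x ∈ D, (fderiv ℂ h x).det ≠ 0 :=
    hJφ.forall_ne_zero_of_ne_zero (fun i => (hφ i).differentiableOn_det_fderiv hDo)
      (fun i x hx => right_ne_zero_of_mul_eq_one (hdet i x hx)) hDo hDc hx₁
      (right_ne_zero_of_mul_eq_one hone)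
  obtain ⟨ρ, hρ, hev⟩ := hφ'.eventually_closedBall_subset_image hφ hDo hp
    ((hh.continuousOn_fderiv hDo).continuousAt (hDo.mem_nhds hp))
    ((fderiv ℂ h p).toContinuousLinearEquivOfDetNeZero (hJne p hp)) (by simp)
  obtain ⟨i, hi, hi'⟩ := (hev.and (Metric.tendsto_nhds.1 (hφh.tendsto_at hp) ρ hρ)).exists
  obtain ⟨y, hy, hyp⟩ := hi (mem_closedBall'.2 hi'.le)
  exact hhp (hyp ▸ hφD i hy)

theorem stmt0_general
    (D : Set (ℂ × ℂ)) (hDopen : IsOpen D) (hDconn : IsConnected D)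
    (hDbd : Bornology.IsBounded D)
    (p : ℂ × ℂ) (hp : p ∈ D)
    (φ : ℕ → (ℂ × ℂ) → (ℂ × ℂ))
    (hφ : ∀ j, DifferentiableOn ℂ (φ j) D ∧ Set.MapsTo (φ j) D D ∧
      ∃ ψ : (ℂ × ℂ) → (ℂ × ℂ), DifferentiableOn ℂ ψ D ∧ Set.MapsTo ψ D D ∧
        Set.EqOn (ψ ∘ φ j) id D ∧ Set.EqOn (φ j ∘ ψ) id D)
    (pinf : ℂ × ℂ) (hpinf : pinf ∈ frontier D)
    (hlim : Tendsto (fun j => φ j p) atTop (nhds pinf))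
    (U : Set (ℂ × ℂ)) (hU : IsOpen U) (hpU : pinf ∈ U)
    (hdisc : ∀ f : ℂ → ℂ × ℂ, DifferentiableOn ℂ f (Metric.ball 0 1) →
      f '' (Metric.ball 0 1) ⊆ U ∩ frontier D →
      ∀ z ∈ Metric.ball (0 : ℂ) 1, ∀ w ∈ Metric.ball (0 : ℂ) 1, f z = f w) :
    TendstoLocallyUniformlyOn (fun j => φ j) (fun _ => pinf) atTop D := by
  choose hφD hφDD ψ hψ hψD hψφ _ using hφ
  obtain ⟨M, hM⟩ := hDbd.exists_norm_le
  have hpinfD : pinf ∉ D := by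
    rw [hDopen.frontier_eq] at hpinf
    exact hpinf.2
  refine tendstoLocallyUniformlyOn_of_forall_ultrafilter hDopen fun 𝒰 h𝒰 => ?_
  obtain ⟨h, hφh⟩ :=
    exists_tendstoLocallyUniformlyOn_of_norm_le 𝒰 hDopen hφD fun j x hx => hM _ (hφDD j hx)
  have hhp : h p = pinf := tendsto_nhds_unique (hφh.tendsto_at hp) (hlim.mono_left h𝒰)
  have hfr : MapsTo h D (frontier D) := fun x hx => by
    rw [hDopen.frontier_eq]
    exact ⟨mem_closure_of_tendsto (hφh.tendsto_at hx) (Eventually.of_forall fun j => hφDD j hx),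
      apply_notMem_of_tendstoLocallyUniformlyOn 𝒰 hDopen hDconn.isPreconnected hM hφD hφDD hψ
        hψD hψφ hφh hp (hhp ▸ hpinfD) x hx⟩
  have hconst := HasNoNonconstantHolomorphicDisc.eq_of_mapsTo hdisc hU hDopen
    hDconn.isPreconnected (hφh.differentiableOn_and_fderiv (Eventually.of_forall hφD) hDopen).1
    hfr hp (hhp ▸ hpU)
  exact hφh.congr_right fun x hx => (hconst x hx).trans hhp

/-- If `D ⊂ ℂ²` is a bounded domain, `p ∈ D`, and `(φ j)` is a sequence of
automorphisms of `D` with `φ j p → p∞ ∈ ∂D`, and `p∞` has an open neighbourhood `U` such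
that every holomorphic disc contained in `U ∩ ∂D` is constant, then `φ j` converges to the
constant map `p∞` locally uniformly on `D`. -/
theorem stmt0
    (D : Set (ℂ × ℂ)) (hDne : D.Nonempty) (hDopen : IsOpen D) (hDconn : IsConnected D)
    (hDbd : Bornology.IsBounded D)
    (p : ℂ × ℂ) (hp : p ∈ D)
    (φ : ℕ → (ℂ × ℂ) → (ℂ × ℂ))
    (hφ : ∀ j, DifferentiableOn ℂ (φ j) D ∧ Set.MapsTo (φ j) D D ∧
      ∃ ψ : (ℂ × ℂ) → (ℂ × ℂ), DifferentiableOn ℂ ψ D ∧ Set.MapsTo ψ D D ∧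
        Set.EqOn (ψ ∘ φ j) id D ∧ Set.EqOn (φ j ∘ ψ) id D)
    (pinf : ℂ × ℂ) (hpinf : pinf ∈ frontier D)
    (hlim : Tendsto (fun j => φ j p) atTop (nhds pinf))
    (U : Set (ℂ × ℂ)) (hU : IsOpen U) (hpU : pinf ∈ U)
    (hdisc : ∀ f : ℂ → ℂ × ℂ, DifferentiableOn ℂ f (Metric.ball 0 1) →
      f '' (Metric.ball 0 1) ⊆ U ∩ frontier D →
      ∀ z ∈ Metric.ball (0 : ℂ) 1, ∀ w ∈ Metric.ball (0 : ℂ) 1, f z = f w) :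
    TendstoLocallyUniformlyOn (fun j => φ j) (fun _ => pinf) atTop D :=
  stmt0_general D hDopen hDconn hDbd p hp φ hφ pinf hpinf hlim U hU hpU hdisc
end

section
/- Let P be a real polynomial without harmonic terms and let G = G_P. Let g : G → G be an automorphism of G such that for every t ∈ ℝ there exists t′ ∈ ℝ with g ∘ T_t = T_{t′} ∘ g on G. Then there exist complex numbers α ≠ 0, a ≠ 0, β, b and an entire function φ : ℂ → ℂ such that g(z₁, z₂) = (α·z₁ + β, φ(z₁) + a·z₂ + b) for all (z₁, z₂) ∈ G. -/
open Complex ComplexConjugate Finset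

/-- An automorphism of an open set `Ω ⊆ ℂ²`: a holomorphic self-map with a holomorphic
inverse. -/
def IsAutOn (Ω : Set (ℂ × ℂ)) (g : (ℂ × ℂ) → (ℂ × ℂ)) : Prop :=
  DifferentiableOn ℂ g Ω ∧ Set.MapsTo g Ω Ω ∧
    ∃ h : (ℂ × ℂ) → (ℂ × ℂ), DifferentiableOn ℂ h Ω ∧ Set.MapsTo h Ω Ω ∧
      Set.EqOn (h ∘ g) id Ω ∧ Set.EqOn (g ∘ h) id Ω

/-- The model domain `G_P = {2 Re z₂ + P(z₁) < 0}`. -/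
def Gdom (P : ℂ → ℝ) : Set (ℂ × ℂ) := {p : ℂ × ℂ | 2 * p.2.re + P p.1 < 0}

/-- The translation `T_t(z₁, z₂) = (z₁, z₂ + i t)`. -/
def Ttr (t : ℝ) : (ℂ × ℂ) → (ℂ × ℂ) := fun p => (p.1, p.2 + Complex.I * t)


/-!
On each fibre `{z₁} × {Re z₂ < -P(z₁)/2}`, a half-plane invariant under vertical translations,
`g ∘ T_t = T_{t'} ∘ g` says that `z₂ ↦ g(z₁, z₂)` changes by the constant `(0, i t')` under
`z₂ ↦ z₂ + i t`. Differentiating in `t` shows that its derivative is constant on the fibre, so it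
is affine in `z₂` with slope `(0, a)`, `a` real and independent of `z₁`. The fibre constants are
locally holomorphic in `z₁`, so `g = (f(z₁), a z₂ + φ(z₁))` with `f, φ` entire. The inverse
automorphism normalizes the translations too, so it has the same shape, and its first component
is an entire inverse of `f`. Then `f` is proper, `1/f(1/z)` has a removable zero at `0`, `f` has
polynomial growth and is a polynomial, and since `f'` never vanishes it has degree one.
-/

open Filter Topology Asymptotics Bornology Polynomial Set

theorem exists_eq_smul_add_of_vertical_shift {E : Type*} [NormedAddCommGroup E] [NormedSpace ℂ E]
    {s : Set ℂ} {v : ℂ → E} {σ : ℝ → E} (hs : IsOpen s) (hsc : IsPreconnected s)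
    (hne : s.Nonempty) (hvert : ∀ w ∈ s, ∀ t : ℝ, w + I * t ∈ s)
    (hv : DifferentiableOn ℂ v s) (hσ : ∀ w ∈ s, ∀ t : ℝ, v (w + I * t) = v w + σ t) :
    ∃ d b : E, (∀ t : ℝ, σ t = (I * t) • d) ∧ ∀ w ∈ s, v w = w • d + b := by
  obtain ⟨w₀, hw₀⟩ := hne
  have hσ_deriv : ∀ w ∈ s, HasDerivAt σ (I • deriv v w) 0 := by
    intro w hw
    have hline : HasDerivAt (fun t : ℝ => w + I * t) I 0 := by
      simpa using (((hasDerivAt_id (0 : ℝ)).ofReal_comp).const_mul I).const_add w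
    have hvw : HasDerivAt v (deriv v w) (w + I * (0 : ℝ)) := by
      simpa using (hv.differentiableAt (hs.mem_nhds hw)).hasDerivAt
    have hσ_eq : σ = fun t : ℝ => v (w + I * t) - v w :=
      funext fun t => by rw [hσ w hw t]; abel
    rw [hσ_eq]
    exact (hvw.scomp (0 : ℝ) hline).sub_const _
  set d := deriv v w₀
  have hderiv : EqOn (deriv v) (deriv fun w => w • d) s := fun w hw => by
    rw [((hasDerivAt_id' w).smul_const d).deriv, one_smul]
    exact smul_right_injective E I_ne_zero ((hσ_deriv w hw).unique (hσ_deriv w₀ hw₀))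
  obtain ⟨b, hb⟩ := hs.exists_eq_add_of_deriv_eq hsc hv
    ((differentiable_id.smul_const d).differentiableOn) hderiv
  refine ⟨d, b, fun t => ?_, hb⟩
  rw [eq_sub_of_add_eq' (hσ w₀ hw₀ t).symm, hb (hvert w₀ hw₀ t), hb hw₀]
  dsimp only
  rw [add_smul]
  abel

theorem Differentiable.exists_polynomial_of_isBigO_pow :
    ∀ {n : ℕ} {f : ℂ → ℂ}, Differentiable ℂ f → f =O[cocompact ℂ] (· ^ n) →
      ∃ p : ℂ[X], ∀ z, f z = p.eval z
  | 0, f, hf, hO => by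
    have hb : IsBounded (range f) :=
      hf.continuous.isBounded_range_iff_isBigO.2 <| hO.trans <|
        (isBigO_const_const (1 : ℂ) one_ne_zero _).congr_left fun z => (pow_zero z).symm
    obtain ⟨c, rfl⟩ := hf.exists_eq_const_of_bounded hb
    exact ⟨C c, fun z => by simp⟩
  | n + 1, f, hf, hO => by
    have hq : Differentiable ℂ (dslope f 0) := fun z =>
      ((differentiableOn_dslope univ_mem).2 hf.differentiableOn).differentiableAt univ_mem
    have hconst : (fun _ : ℂ => f 0) =O[cocompact ℂ] (· ^ (n + 1)) := by
      refine (isLittleO_const_left.2 (Or.inr ?_)).isBigO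
      simpa [Function.comp_def] using
        (tendsto_pow_atTop (n := n + 1) (by lia)).comp tendsto_norm_cocompact_atTop
    have hslope : dslope f 0 =ᶠ[cocompact ℂ] fun z => z⁻¹ * (f z - f 0) := by
      filter_upwards [Metric.cobounded_eq_cocompact (α := ℂ) ▸ eventually_ne_cobounded 0]
        with z hz
      rw [dslope_of_ne f hz, slope_def_field, sub_zero, div_eq_inv_mul]
    have hpow : (fun z : ℂ => z⁻¹ * z ^ (n + 1)) =ᶠ[cocompact ℂ] (· ^ n) := by
      filter_upwards [Metric.cobounded_eq_cocompact (α := ℂ) ▸ eventually_ne_cobounded 0]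
        with z hz
      rw [pow_succ', inv_mul_cancel_left₀ hz]
    obtain ⟨p, hp⟩ := hq.exists_polynomial_of_isBigO_pow
      (((isBigO_refl (·⁻¹) _).mul (hO.sub hconst)).congr' hslope.symm hpow)
    refine ⟨C (f 0) + X * p, fun z => ?_⟩
    have h := sub_smul_dslope f 0 z
    rw [sub_zero, smul_eq_mul, hp z] at h
    simp only [eval_add, eval_C, eval_mul, eval_X]
    linear_combination -h

theorem Differentiable.exists_isBigO_pow_of_tendsto_cocompact {f : ℂ → ℂ}
    (hf : Differentiable ℂ f) (hf_proper : Tendsto f (cocompact ℂ) (cocompact ℂ)) :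
    ∃ n : ℕ, f =O[cocompact ℂ] (· ^ n) := by
  rw [← Metric.cobounded_eq_cocompact] at hf_proper ⊢
  have hinv : Tendsto (fun z => f z⁻¹) (𝓝[≠] 0) (cobounded ℂ) :=
    hf_proper.comp tendsto_inv₀_nhdsNE_zero
  -- `F` is `f` seen from `∞`, with its removable singularity at `0` filled in
  set F : ℂ → ℂ := Function.update (fun z => (f z⁻¹)⁻¹) 0 0
  have hF_ne : ∀ᶠ z in 𝓝[≠] 0, F z = (f z⁻¹)⁻¹ ∧ f z⁻¹ ≠ 0 := by
    filter_upwards [self_mem_nhdsWithin, hinv.eventually_ne_cobounded 0] with z hz hfz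
    exact ⟨Function.update_of_ne hz _ _, hfz⟩
  have hF : AnalyticAt ℂ F 0 := by
    refine analyticAt_of_differentiable_on_punctured_nhds_of_continuousAt ?_
      (continuousAt_update_same.2 (tendsto_inv₀_cobounded.comp hinv))
    filter_upwards [self_mem_nhdsWithin, hinv.eventually_ne_cobounded 0] with z hz hfz
    have hFz : F =ᶠ[𝓝 z] fun z => (f z⁻¹)⁻¹ :=
      eventually_of_mem (isOpen_compl_singleton.mem_nhds hz) fun w hw => Function.update_of_ne hw _ _
    exact hFz.differentiableAt_iff.2 (((hf _).comp z (differentiableAt_inv hz)).inv hfz)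
  have hF_order : analyticOrderAt F 0 ≠ ⊤ := by
    intro htop
    obtain ⟨z, hz0, hFz, hfz⟩ := ((analyticOrderAt_eq_top.1 htop).filter_mono nhdsWithin_le_nhds
      |>.and hF_ne).exists
    exact inv_ne_zero hfz (hFz ▸ hz0)
  obtain ⟨n, hn⟩ := ENat.ne_top_iff_exists.1 hF_order
  obtain ⟨u, hu, hu0, hFu⟩ := hF.analyticOrderAt_eq_natCast.1 hn.symm
  refine ⟨n, ?_⟩
  have hu_inv : Tendsto (fun w => (u w⁻¹)⁻¹) (cobounded ℂ) (𝓝 (u 0)⁻¹) :=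
    ((hu.continuousAt.tendsto).inv₀ hu0).comp tendsto_inv₀_cobounded
  have hf_eq : (fun w => w ^ n * (u w⁻¹)⁻¹) =ᶠ[cobounded ℂ] f := by
    filter_upwards [tendsto_inv₀_cobounded'.eventually
      ((hFu.filter_mono nhdsWithin_le_nhds).and hF_ne)] with w hw
    obtain ⟨hFw, hFw', -⟩ := hw
    rw [inv_inv] at hFw'
    rw [← inv_inv (f w), ← hFw', hFw, sub_zero, smul_eq_mul, mul_inv, inv_pow, inv_inv]
  simpa using ((isBigO_refl (· ^ n) _).mul (hu_inv.isBigO_one ℂ)).congr' hf_eq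
    (Eventually.of_forall fun w => mul_one _)

theorem Polynomial.exists_eval_eq_mul_add_of_eval_derivative_ne_zero (p : ℂ[X])
    (hp : ∀ z, p.derivative.eval z ≠ 0) : ∃ α β : ℂ, α ≠ 0 ∧ ∀ z, p.eval z = α * z + β := by
  have hdeg : p.derivative.natDegree = 0 := by
    by_contra h
    obtain ⟨z, hz⟩ := Complex.exists_root (natDegree_pos_iff_degree_pos.1 (Nat.pos_of_ne_zero h))
    exact hp z hz
  have hp1 : p.natDegree ≤ 1 := by
    rw [natDegree_derivative] at hdeg
    lia
  refine ⟨p.coeff 1, p.coeff 0, fun h1 => hp 0 ?_, fun z => ?_⟩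
  · rw [eq_X_add_C_of_natDegree_le_one hp1, h1]
    simp
  · rw [eq_X_add_C_of_natDegree_le_one hp1]
    simp

theorem Differentiable.exists_eq_mul_add_of_leftInverse {f f' : ℂ → ℂ}
    (hf : Differentiable ℂ f) (hf' : Differentiable ℂ f')
    (hleft : Function.LeftInverse f' f) (hright : Function.RightInverse f' f) :
    ∃ α β : ℂ, α ≠ 0 ∧ ∀ z, f z = α * z + β := by
  let e : ℂ ≃ₜ ℂ := ⟨⟨f, f', hleft, hright⟩, hf.continuous, hf'.continuous⟩
  obtain ⟨n, hn⟩ := hf.exists_isBigO_pow_of_tendsto_cocompact e.map_cocompact.le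
  obtain ⟨p, hp⟩ := hf.exists_polynomial_of_isBigO_pow hn
  obtain ⟨α, β, hα, hpαβ⟩ := p.exists_eval_eq_mul_add_of_eval_derivative_ne_zero fun z h0 => by
    have hchain := (hf'.differentiableAt.hasDerivAt.comp z hf.differentiableAt.hasDerivAt)
    rw [show f' ∘ f = id from funext hleft, (funext hp : f = _), Polynomial.deriv, h0,
      mul_zero] at hchain
    exact one_ne_zero ((hasDerivAt_id z).unique hchain)
  exact ⟨α, β, hα, fun z => (hp z).trans (hpαβ z)⟩

theorem Set.EqOn.inverse_left_of_invOn {X : Type*} {Ω : Set X} {g h A B : X → X}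
    (hgAB : EqOn (g ∘ A) (B ∘ g) Ω) (hA : MapsTo A Ω Ω) (hh : MapsTo h Ω Ω)
    (hhg : LeftInvOn h g Ω) (hgh : RightInvOn h g Ω) : EqOn (h ∘ B) (A ∘ h) Ω := fun q hq => by
  simp only [Function.comp_apply]
  rw [← hgh hq, ← Function.comp_apply (f := B), ← hgAB (hh hq), hgh hq, Function.comp_apply,
    hhg (hA (hh hq))]

theorem Function.LeftInverse.of_fst_eq {α β : Type*} {Ω : Set (α × β)} (hΩ : ∀ z, ∃ w, (z, w) ∈ Ω)
    {g h : α × β → α × β} {f f' : α → α} (hg : ∀ p ∈ Ω, (g p).1 = f p.1)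
    (hh : ∀ p ∈ Ω, (h p).1 = f' p.1) (hgΩ : MapsTo g Ω Ω) (hhg : LeftInvOn h g Ω) :
    Function.LeftInverse f' f := fun z => by
  obtain ⟨w, hw⟩ := hΩ z
  rw [← hg _ hw, ← hh _ (hgΩ hw), hhg hw]

section Gdom

variable {P : ℂ → ℝ}

theorem mk_mem_Gdom_iff {z w : ℂ} : (z, w) ∈ Gdom P ↔ w.re < -P z / 2 := by
  show 2 * w.re + P z < 0 ↔ _
  constructor <;> intro h <;> linarith

theorem exists_mk_mem_Gdom (P : ℂ → ℝ) (z : ℂ) : ∃ w, (z, w) ∈ Gdom P :=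
  ⟨(-P z / 2 - 1 : ℝ), mk_mem_Gdom_iff.2 (by simp)⟩

theorem mapsTo_Ttr_Gdom (t : ℝ) : MapsTo (Ttr t) (Gdom P) (Gdom P) := fun p hp =>
  mk_mem_Gdom_iff.2 (by simpa [Ttr] using mk_mem_Gdom_iff.1 hp)

theorem isOpen_Gdom (hP : Continuous P) : IsOpen (Gdom P) :=
  isOpen_lt (by fun_prop) continuous_const

theorem exists_differentiable_eq_comp_fst {E : Type*} [NormedAddCommGroup E] [NormedSpace ℂ E]
    (hP : Continuous P) {u : ℂ × ℂ → E} (hu : DifferentiableOn ℂ u (Gdom P))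
    (hfib : ∀ p ∈ Gdom P, ∀ q ∈ Gdom P, p.1 = q.1 → u p = u q) :
    ∃ F : ℂ → E, Differentiable ℂ F ∧ ∀ p ∈ Gdom P, u p = F p.1 := by
  choose w hw using exists_mk_mem_Gdom P
  refine ⟨fun z => u (z, w z), fun z₀ => ?_, fun p hp => hfib _ hp _ (hw p.1) rfl⟩
  -- near `z₀` the fibre point `w z` can be replaced by a constant one
  obtain ⟨c, hc⟩ : ∃ c : ℂ, c.re < -P z₀ / 2 := ⟨(-P z₀ / 2 - 1 : ℝ), by simp⟩
  have hnear : ∀ᶠ z in 𝓝 z₀, (z, c) ∈ Gdom P :=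
    ((isOpen_Gdom hP).preimage (Continuous.prodMk_left c)).mem_nhds (mk_mem_Gdom_iff.2 hc)
  have hloc : (fun z => u (z, w z)) =ᶠ[𝓝 z₀] fun z => u (z, c) :=
    hnear.mono fun z hz => hfib _ (hw z) _ hz rfl
  exact hloc.differentiableAt_iff.2 <| (hu.differentiableAt
    ((isOpen_Gdom hP).mem_nhds hnear.self_of_nhds)).comp z₀ (differentiableAt_id.prodMk
      (differentiableAt_const c))

theorem exists_eq_add_on_fiber {g : ℂ × ℂ → ℂ × ℂ}
    (hg : DifferentiableOn ℂ g (Gdom P)) {κ : ℝ → ℝ}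
    (hκ : ∀ t, EqOn (g ∘ Ttr t) (Ttr (κ t) ∘ g) (Gdom P)) (z : ℂ) :
    (∀ t, κ t = κ 1 * t) ∧ ∃ b : ℂ × ℂ, ∀ w, (z, w) ∈ Gdom P → g (z, w) = b + (0, κ 1 * w) := by
  have hs : IsOpen {w : ℂ | w.re < -P z / 2} := isOpen_lt continuous_re continuous_const
  have hshift : ∀ w ∈ {w : ℂ | w.re < -P z / 2}, ∀ t : ℝ,
      g (z, w + I * t) = g (z, w) + (0, I * κ t) := fun w hw t => by
    simpa [Ttr, Prod.ext_iff] using hκ t (mk_mem_Gdom_iff.2 hw)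
  obtain ⟨d, b, hσ, hgb⟩ := exists_eq_smul_add_of_vertical_shift (v := fun w => g (z, w)) hs
    (convex_halfSpace_re_lt _).isPreconnected ⟨(-P z / 2 - 1 : ℝ), by simp⟩
    (fun w hw t => by simpa using hw)
    (hg.comp ((differentiableOn_const z).prodMk differentiableOn_id)
      fun w hw => mk_mem_Gdom_iff.2 hw) hshift
  have hd : d = (0, (κ 1 : ℂ)) := by
    have h1 := hσ 1
    simp only [Prod.ext_iff, ofReal_one, mul_one, Prod.smul_fst, Prod.smul_snd, smul_eq_mul] at h1
    ext
    · simpa [I_ne_zero, eq_comm] using h1.1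
    · simpa [I_ne_zero] using h1.2.symm
  refine ⟨fun t => ?_, b, fun w hw => ?_⟩
  · have ht := congrArg Prod.snd (hσ t)
    simp only [hd, Prod.smul_snd, smul_eq_mul] at ht
    have : I * (κ t : ℂ) = I * ((κ 1 * t : ℝ) : ℂ) := by push_cast; linear_combination ht
    exact_mod_cast mul_left_cancel₀ I_ne_zero this
  · rw [hgb _ (mk_mem_Gdom_iff.1 hw), hd, add_comm]
    simp [mul_comm]

theorem exists_eq_of_eqOn_comp_Ttr (hP : Continuous P) {g : ℂ × ℂ → ℂ × ℂ}
    (hg : DifferentiableOn ℂ g (Gdom P)) {κ : ℝ → ℝ}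
    (hκ : ∀ t, EqOn (g ∘ Ttr t) (Ttr (κ t) ∘ g) (Gdom P)) :
    (∀ t, κ t = κ 1 * t) ∧ ∃ f φ : ℂ → ℂ, Differentiable ℂ f ∧ Differentiable ℂ φ ∧
      ∀ p ∈ Gdom P, g p = (f p.1, κ 1 * p.2 + φ p.1) := by
  choose hlin b hb using exists_eq_add_on_fiber hg hκ
  obtain ⟨F, hF, hgF⟩ := exists_differentiable_eq_comp_fst hP
    (u := fun p => g p - (0, κ 1 * p.2)) (hg.sub (by fun_prop)) fun p hp q hq hpq => by
      obtain ⟨z, w⟩ := p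
      obtain ⟨z', w'⟩ := q
      obtain rfl : z = z' := hpq
      simp [hb z w hp, hb z w' hq]
  refine ⟨hlin 0, fun z => (F z).1, fun z => (F z).2, hF.fst, hF.snd, fun p hp => ?_⟩
  simp only [← hgF p hp, Prod.fst_sub, Prod.snd_sub, sub_zero, add_sub_cancel]

theorem ne_zero_of_injOn_of_eq {g : ℂ × ℂ → ℂ × ℂ} {f φ : ℂ → ℂ} {a : ℂ}
    (hinj : InjOn g (Gdom P)) (hg : ∀ p ∈ Gdom P, g p = (f p.1, a * p.2 + φ p.1)) : a ≠ 0 := by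
  rintro rfl
  obtain ⟨w, hw⟩ := exists_mk_mem_Gdom P 0
  have hw' : ((0 : ℂ), w - 1) ∈ Gdom P := mk_mem_Gdom_iff.2 (by
    have := mk_mem_Gdom_iff.1 hw
    simp only [sub_re, one_re]
    linarith)
  have := congrArg Prod.snd (hinj hw hw' (by rw [hg _ hw, hg _ hw']; simp))
  exact one_ne_zero (by linear_combination this : (1 : ℂ) = 0)

end Gdom

theorem stmt1_general (c : ℕ → ℕ → ℂ) (N : ℕ) (P : ℂ → ℝ)
    (hP : ∀ z : ℂ, (P z : ℂ) = ∑ j ∈ Finset.range (N + 1), ∑ q ∈ Finset.range (N + 1),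
      c j q * z ^ j * (conj z) ^ q)
    (g : (ℂ × ℂ) → (ℂ × ℂ)) (hg : IsAutOn (Gdom P) g)
    (hnorm : ∀ t : ℝ, ∃ t' : ℝ, Set.EqOn (g ∘ Ttr t) (Ttr t' ∘ g) (Gdom P)) :
    ∃ (α a β b : ℂ) (φ : ℂ → ℂ), α ≠ 0 ∧ a ≠ 0 ∧ Differentiable ℂ φ ∧
      ∀ p ∈ Gdom P, g p = (α * p.1 + β, φ p.1 + a * p.2 + b) := by
  obtain ⟨hgd, hgG, h, hhd, hhG, hhg, hgh⟩ := hg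
  have hPc : Continuous P := by
    have : Continuous fun z => (P z : ℂ) := by simp_rw [hP]; fun_prop
    exact (continuous_re.comp this).congr fun z => ofReal_re (P z)
  choose κ hκ using hnorm
  obtain ⟨hlin, f, φ, hf, hφ, hgfφ⟩ := exists_eq_of_eqOn_comp_Ttr hPc hgd hκ
  have ha : (κ 1 : ℂ) ≠ 0 := ne_zero_of_injOn_of_eq (LeftInvOn.injOn (f₁' := h) hhg) hgfφ
  have hhκ : ∀ s, EqOn (h ∘ Ttr s) (Ttr (s / κ 1) ∘ h) (Gdom P) := fun s =>
    EqOn.inverse_left_of_invOn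
      (by simpa [hlin (s / κ 1), mul_div_cancel₀ _ (ofReal_ne_zero.1 ha)] using hκ (s / κ 1))
      (mapsTo_Ttr_Gdom _) hhG hhg hgh
  obtain ⟨-, f', _, hf', -, hhf'⟩ := exists_eq_of_eqOn_comp_Ttr hPc hhd hhκ
  have hfst : ∀ p ∈ Gdom P, (g p).1 = f p.1 := fun p hp => by rw [hgfφ p hp]
  have hfst' : ∀ p ∈ Gdom P, (h p).1 = f' p.1 := fun p hp => by rw [hhf' p hp]
  obtain ⟨α, β, hα, hfαβ⟩ := hf.exists_eq_mul_add_of_leftInverse hf'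
    (.of_fst_eq (exists_mk_mem_Gdom P) hfst hfst' hgG hhg)
    (.of_fst_eq (exists_mk_mem_Gdom P) hfst' hfst hhG hgh)
  refine ⟨α, κ 1, β, 0, φ, hα, ha, hφ, fun p hp => ?_⟩
  rw [hgfφ p hp, hfαβ, add_zero, add_comm (φ p.1)]

/-- if `P` is a real polynomial without harmonic terms, `G = G_P`, and
`g ∈ Aut(G)` normalizes the translation group `(T_t)`, then
`g(z₁, z₂) = (α z₁ + β, φ(z₁) + a z₂ + b)` with `α, a ≠ 0` and `φ` entire. -/
theorem stmt1 (c : ℕ → ℕ → ℂ) (N : ℕ) (P : ℂ → ℝ)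
    (hsym : ∀ j q, c j q = conj (c q j))
    (hharm : ∀ j q, j = 0 ∨ q = 0 → c j q = 0)
    (hsupp : ∀ j q, N < j ∨ N < q → c j q = 0)
    (hP : ∀ z : ℂ, (P z : ℂ) = ∑ j ∈ Finset.range (N + 1), ∑ q ∈ Finset.range (N + 1),
      c j q * z ^ j * (conj z) ^ q)
    (g : (ℂ × ℂ) → (ℂ × ℂ)) (hg : IsAutOn (Gdom P) g)
    (hnorm : ∀ t : ℝ, ∃ t' : ℝ, Set.EqOn (g ∘ Ttr t) (Ttr t' ∘ g) (Gdom P)) :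
    ∃ (α a β b : ℂ) (φ : ℂ → ℂ), α ≠ 0 ∧ a ≠ 0 ∧ Differentiable ℂ φ ∧
      ∀ p ∈ Gdom P, g p = (α * p.1 + β, φ p.1 + a * p.2 + b) :=
  stmt1_general c N P hP g hg hnorm
end

section
/- Let P be a real polynomial without harmonic terms. Let α, a, β, b ∈ ℂ and let φ : ℂ → ℂ be an entire function such that 2·Re(φ(z₁) + a·z₂ + b) + P(α·z₁ + β) = 0 for every (z₁, z₂) ∈ ℂ² satisfying 2·Re z₂ + P(z₁) = 0. Then: (i) a is real; (ii) φ is a polynomial; and (iii) 2·Re(φ(z) + b) − a·P(z) + P(α·z + β) = 0 for all z ∈ ℂ. -/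
/-!
Taking `z₂` real on the boundary gives the identity (iii), and moving `z₂` by `i` along the
boundary gives `Im a = 0`. By (iii), `2 Re φ(z) = R(z, z̄)` for a polynomial `R` in two complex
variables. Then `φ(z) + conj (φ (conj w)) - R(z, w)` is holomorphic on `ℂ²` and vanishes on the
totally real plane `w = z̄`, hence everywhere; putting `w = 0` exhibits `φ` as a polynomial.
-/

open Complex ComplexConjugate Finset Filter Topology Polynomial

theorem Differentiable.eq_zero_of_forall_ofReal {f : ℂ → ℂ} (hf : Differentiable ℂ f)
    (h : ∀ x : ℝ, f x = 0) : f = 0 := by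
  have hlim : Tendsto ((↑) : ℝ → ℂ) (𝓝[≠] 0) (𝓝[≠] 0) :=
    continuous_ofReal.continuousWithinAt.tendsto_nhdsWithin fun x hx => by simpa using hx
  exact AnalyticOnNhd.eq_of_frequently_eq (fun z _ => hf.analyticAt z) analyticOnNhd_const
    (hlim.frequently (Frequently.of_forall h))

theorem Differentiable.eq_zero_of_forall_conj {F : ℂ × ℂ → ℂ} (hF : Differentiable ℂ F)
    (h : ∀ z, F (z, conj z) = 0) (p : ℂ × ℂ) : F p = 0 := by
  -- `(u, v) ↦ (u + i v, u - i v)` maps `ℝ²` onto the plane `{(z, z̄)}`.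
  set G : ℂ → ℂ → ℂ := fun u v => F (u + I * v, u - I * v)
  have hG_real (x v : ℝ) : G x v = 0 := by
    simpa [G, ← sub_eq_add_neg] using h (x + I * v)
  have hG_real_snd (v : ℝ) (u : ℂ) : G u v = 0 :=
    congrFun ((show Differentiable ℂ (G · v) by fun_prop).eq_zero_of_forall_ofReal
      (hG_real · v)) u
  have hG (u v : ℂ) : G u v = 0 :=
    congrFun ((show Differentiable ℂ (G u) by fun_prop).eq_zero_of_forall_ofReal
      (hG_real_snd · u)) v
  obtain ⟨z, w⟩ := p
  have hz : (z + w) / 2 + I * (-I * (z - w) / 2) = z := by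
    linear_combination (-(z - w) / 2) * I_sq
  have hw : (z + w) / 2 - I * (-I * (z - w) / 2) = w := by
    linear_combination ((z - w) / 2) * I_sq
  simpa only [G, hz, hw] using hG ((z + w) / 2) (-I * (z - w) / 2)

theorem Differentiable.eq_sub_conj_of_two_re_eq {φ : ℂ → ℂ} (hφ : Differentiable ℂ φ)
    {R : ℂ × ℂ → ℂ} (hR : Differentiable ℂ R) (h : ∀ z, 2 * ((φ z).re : ℂ) = R (z, conj z))
    (z : ℂ) : φ z = R (z, 0) - conj (φ 0) := by
  have hψ : Differentiable ℂ (conj ∘ φ ∘ conj) := fun w =>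
    differentiableAt_conj_conj_iff.mpr (hφ _)
  have hF : Differentiable ℂ fun p : ℂ × ℂ => φ p.1 + (conj ∘ φ ∘ conj) p.2 - R p :=
    ((hφ.comp differentiable_fst).add (hψ.comp differentiable_snd)).sub hR
  have := hF.eq_zero_of_forall_conj (fun w => by simp [add_conj, h]) (z, 0)
  simp only [Function.comp_apply, map_zero] at this
  linear_combination this

-- With the coefficients of the theorem, `P z = biPoly c N z (conj z)`.
def biPoly (c : ℕ → ℕ → ℂ) (N : ℕ) (z w : ℂ) : ℂ :=
  ∑ j ∈ range (N + 1), ∑ q ∈ range (N + 1), c j q * z ^ j * w ^ q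

theorem differentiable_biPoly (c : ℕ → ℕ → ℂ) (N : ℕ) :
    Differentiable ℂ fun p : ℂ × ℂ => biPoly c N p.1 p.2 := by
  unfold biPoly; fun_prop

theorem exists_eval_eq_biPoly (c : ℕ → ℕ → ℂ) (N : ℕ) (α β w : ℂ) :
    ∃ Q : ℂ[X], ∀ z, biPoly c N (α * z + β) w = Q.eval z :=
  ⟨∑ j ∈ range (N + 1), ∑ q ∈ range (N + 1), C (c j q * w ^ q) * (C α * X + C β) ^ j,
    fun z => by simp [biPoly, eval_finsetSum, mul_right_comm]⟩

def PreservesBoundary (P : ℂ → ℝ) (φ : ℂ → ℂ) (α a β b : ℂ) : Prop :=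
  ∀ z₁ z₂ : ℂ, 2 * z₂.re + P z₁ = 0 → 2 * (φ z₁ + a * z₂ + b).re + P (α * z₁ + β) = 0

namespace PreservesBoundary

variable {P : ℂ → ℝ} {φ : ℂ → ℂ} {α a β b : ℂ}

theorem im_eq_zero (h : PreservesBoundary P φ α a β b) : a.im = 0 := by
  have h₀ := h 0 (-P 0 / 2 : ℝ) (by rw [ofReal_re]; ring)
  have h₁ := h 0 ((-P 0 / 2 : ℝ) + I) (by rw [add_re, ofReal_re, I_re]; ring)
  simp only [add_re, mul_re, mul_add, ofReal_re, ofReal_im, I_re, I_im] at h₀ h₁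
  linarith

theorem two_re_add_sub_re_mul_add_eq_zero (h : PreservesBoundary P φ α a β b) (z : ℂ) :
    2 * (φ z + b).re - a.re * P z + P (α * z + β) = 0 := by
  have hz := h z (-P z / 2 : ℝ) (by rw [ofReal_re]; ring)
  simp only [add_re, mul_re, ofReal_re, ofReal_im] at hz ⊢
  linarith

end PreservesBoundary

theorem stmt2_general (c : ℕ → ℕ → ℂ) (N : ℕ) (P : ℂ → ℝ)
    (hP : ∀ z : ℂ, (P z : ℂ) = ∑ j ∈ Finset.range (N + 1), ∑ q ∈ Finset.range (N + 1),
      c j q * z ^ j * (conj z) ^ q)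
    (α a β b : ℂ) (φ : ℂ → ℂ) (hφ : Differentiable ℂ φ)
    (hbd : ∀ z₁ z₂ : ℂ, 2 * z₂.re + P z₁ = 0 →
      2 * (φ z₁ + a * z₂ + b).re + P (α * z₁ + β) = 0) :
    a.im = 0 ∧ (∃ Q : Polynomial ℂ, ∀ z : ℂ, φ z = Q.eval z) ∧
      ∀ z : ℂ, 2 * (φ z + b).re - a.re * P z + P (α * z + β) = 0 := by
  have hid := PreservesBoundary.two_re_add_sub_re_mul_add_eq_zero hbd
  refine ⟨PreservesBoundary.im_eq_zero hbd, ?_, hid⟩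
  set R : ℂ × ℂ → ℂ := fun p =>
    a.re * biPoly c N p.1 p.2 - biPoly c N (α * p.1 + β) (conj α * p.2 + conj β) - 2 * b.re
  have hR : Differentiable ℂ R := by
    have := differentiable_biPoly c N
    fun_prop
  have hφR (z : ℂ) : 2 * ((φ z).re : ℂ) = R (z, conj z) := by
    have hPz : (P z : ℂ) = biPoly c N z (conj z) := hP z
    have hPαz : (P (α * z + β) : ℂ) = biPoly c N (α * z + β) (conj α * conj z + conj β) := by
      rw [hP, map_add, map_mul]; rfl
    have := congrArg ((↑) : ℝ → ℂ) (hid z)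
    push_cast [add_re, hPz, hPαz] at this
    linear_combination this
  obtain ⟨Q₁, hQ₁⟩ := exists_eval_eq_biPoly c N 1 0 0
  obtain ⟨Q₂, hQ₂⟩ := exists_eval_eq_biPoly c N α β (conj β)
  refine ⟨C (a.re : ℂ) * Q₁ - Q₂ - C (2 * b.re + conj (φ 0)), fun z => ?_⟩
  have hQ₁z : biPoly c N z 0 = Q₁.eval z := by simpa only [one_mul, add_zero] using hQ₁ z
  simp only [hφ.eq_sub_conj_of_two_re_eq hR hφR z, R, hQ₁z, hQ₂, mul_zero, zero_add, map_add,
    map_mul, eval_sub, eval_mul, eval_add, eval_C]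
  ring

/-- if the map `(z₁,z₂) ↦ (α z₁ + β, φ(z₁) + a z₂ + b)` maps the boundary
`{2 Re z₂ + P(z₁) = 0}` of `G_P` into itself, where `P` is a real polynomial without
harmonic terms and `φ` is entire, then `a` is real, `φ` is a polynomial, and
`2 Re(φ(z) + b) − a P(z) + P(α z + β) = 0` for all `z`. -/
theorem stmt2 (c : ℕ → ℕ → ℂ) (N : ℕ) (P : ℂ → ℝ)
    (hsym : ∀ j q, c j q = conj (c q j))
    (hharm : ∀ j q, j = 0 ∨ q = 0 → c j q = 0)
    (hsupp : ∀ j q, N < j ∨ N < q → c j q = 0)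
    (hP : ∀ z : ℂ, (P z : ℂ) = ∑ j ∈ Finset.range (N + 1), ∑ q ∈ Finset.range (N + 1),
      c j q * z ^ j * (conj z) ^ q)
    (α a β b : ℂ) (φ : ℂ → ℂ) (hφ : Differentiable ℂ φ)
    (hbd : ∀ z₁ z₂ : ℂ, 2 * z₂.re + P z₁ = 0 →
      2 * (φ z₁ + a * z₂ + b).re + P (α * z₁ + β) = 0) :
    a.im = 0 ∧ (∃ Q : Polynomial ℂ, ∀ z : ℂ, φ z = Q.eval z) ∧
      ∀ z : ℂ, 2 * (φ z + b).re - a.re * P z + P (α * z + β) = 0 :=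
  stmt2_general c N P hP α a β b φ hφ hbd
end

section
/- Let k be a positive integer and let α ∈ ℂ satisfy |1 + α^m|^{2k} = 1 + |α^m|^{2k} for every positive integer m. Then α = 0 or |α| = 1. -/
/-! For `‖z‖ ≤ 1`, Bernoulli's inequality turns `(‖1 + z‖²)ᵏ = 1 + (‖z‖²)ᵏ` into
`1 < ‖1 + z‖² ≤ 1 + ‖z‖²`, i.e. `-‖z‖² < 2 Re z ≤ 0`. For `z = α` this gives `4 (Re α)² < ‖α‖⁴`,
and since `Re α² = 2 (Re α)² - ‖α‖²`, the lower bound for `z = α²` then forces `‖α‖ > 1`.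
The hypothesis is invariant under `α ↦ α⁻¹`, so also `‖α‖ < 1`: hence `α = 0`. -/

open Complex

lemma one_lt_of_pow_eq_one_add_pow {u s : ℝ} {k : ℕ} (hu : 0 ≤ u) (hs : 0 < s)
    (h : u ^ k = 1 + s ^ k) : 1 < u := by
  by_contra! hu1
  have : 1 + s ^ k ≤ 1 := h ▸ pow_le_one₀ hu hu1
  linarith [pow_pos hs k]

lemma le_one_add_of_pow_eq_one_add_pow {u s : ℝ} {k : ℕ} (hk : 0 < k) (hu : 1 ≤ u)
    (hs₀ : 0 ≤ s) (hs₁ : s ≤ 1) (h : u ^ k = 1 + s ^ k) : u ≤ 1 + s := by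
  have bernoulli : 1 + k * (u - 1) ≤ u ^ k := one_add_mul_sub_le_pow (by linarith) k
  have hsk : s ^ k ≤ s := pow_le_of_le_one hs₀ hs₁ hk.ne'
  have hk1 : (1 : ℝ) ≤ k := by exact_mod_cast hk
  nlinarith

lemma sq_norm_one_add (z : ℂ) : ‖1 + z‖ ^ 2 = 1 + 2 * z.re + ‖z‖ ^ 2 := by
  rw [Complex.sq_norm, Complex.sq_norm, normSq_add, normSq_one, one_mul, conj_re]
  ring

lemma one_lt_norm_of_sq_norm_one_add_bounds {z : ℂ} (h₁ : 1 < ‖1 + z‖ ^ 2)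
    (h₂ : ‖1 + z‖ ^ 2 ≤ 1 + ‖z‖ ^ 2) (h₃ : 1 < ‖1 + z ^ 2‖ ^ 2) : 1 < ‖z‖ := by
  rw [sq_norm_one_add] at h₁ h₂ h₃
  have hre : (z ^ 2).re = 2 * z.re ^ 2 - ‖z‖ ^ 2 := by
    rw [sq z, mul_re, Complex.sq_norm, normSq_apply]
    ring
  rw [hre, norm_pow] at h₃
  have hre_sq : 4 * z.re ^ 2 < (‖z‖ ^ 2) ^ 2 := by nlinarith
  have hz : 0 < ‖z‖ ^ 2 := by nlinarith
  have hsq : 1 < ‖z‖ ^ 2 := by nlinarith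
  exact (one_lt_sq_iff₀ (norm_nonneg z)).1 hsq

lemma one_lt_norm_of_norm_one_add_pow_eq {z : ℂ} {k : ℕ} (hz : z ≠ 0) (hk : 0 < k)
    (h₁ : ‖1 + z‖ ^ (2 * k) = 1 + ‖z‖ ^ (2 * k))
    (h₂ : ‖1 + z ^ 2‖ ^ (2 * k) = 1 + ‖z ^ 2‖ ^ (2 * k)) : 1 < ‖z‖ := by
  by_contra! hz1
  simp only [pow_mul] at h₁ h₂
  have hlt₁ := one_lt_of_pow_eq_one_add_pow (sq_nonneg _) (by positivity) h₁
  have hle₁ := le_one_add_of_pow_eq_one_add_pow hk hlt₁.le (sq_nonneg _)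
    (pow_le_one₀ (norm_nonneg z) hz1) h₁
  have hlt₂ := one_lt_of_pow_eq_one_add_pow (sq_nonneg _) (by simp [hz]) h₂
  exact hz1.not_gt (one_lt_norm_of_sq_norm_one_add_bounds hlt₁ hle₁ hlt₂)

lemma norm_one_add_inv_pow_eq {z : ℂ} {n : ℕ} (h : ‖1 + z‖ ^ n = 1 + ‖z‖ ^ n) :
    ‖1 + z⁻¹‖ ^ n = 1 + ‖z⁻¹‖ ^ n := by
  rcases eq_or_ne z 0 with rfl | hz
  · simpa using h
  have hn : ‖z‖ ^ n ≠ 0 := by positivity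
  have hinv : 1 + z⁻¹ = (1 + z) * z⁻¹ := by field_simp; ring
  rw [hinv, norm_mul, norm_inv, mul_pow, inv_pow, h]
  field_simp
  ring

/-- if `k ≥ 1` and `|1 + α^m|^(2k) = 1 + |α^m|^(2k)` for every `m ≥ 1`,
then `α = 0` or `|α| = 1`. -/
theorem stmt6 (k : ℕ) (hk : 0 < k) (α : ℂ)
    (h : ∀ m : ℕ, 1 ≤ m →
      ‖1 + α ^ m‖ ^ (2 * k) = 1 + ‖α ^ m‖ ^ (2 * k)) :
    α = 0 ∨ ‖α‖ = 1 := by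
  refine Or.inl (by_contra fun hα => ?_)
  have h₁ := h 1 le_rfl
  have h₂ := h 2 one_le_two
  rw [pow_one] at h₁
  have hgt : 1 < ‖α‖ := one_lt_norm_of_norm_one_add_pow_eq hα hk h₁ h₂
  have hlt : 1 < ‖α⁻¹‖ := one_lt_norm_of_norm_one_add_pow_eq (inv_ne_zero hα) hk
    (norm_one_add_inv_pow_eq h₁) (by simpa only [inv_pow] using norm_one_add_inv_pow_eq h₂)
  rw [norm_inv] at hlt
  linarith [inv_lt_one_of_one_lt₀ hgt]
end

section
/- Let p and q be positive integers with p ≠ q. Then there exists ε > 0 such that for every z ∈ ℂ with 0 < |z| < ε one has (1 + z)^p · (1 + conj z)^q ≠ 1 + z^p · (conj z)^q. In other words, the origin is an isolated zero of the real-analytic function f(z) = (1 + z)^p (1 + conj z)^q − 1 − z^p (conj z)^q. -/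
/-!
Write the left-hand side minus `z ^ p * conj z ^ q` as `g (1 + z) - g z` with
`g w = w ^ p * conj w ^ q`. As a map of real vector spaces `g` has derivative `0` at `0` (as
`p, q ≥ 1`) and `h ↦ p h + q conj h` at `1`. This derivative is `h ↦ (p + q) Re h + (p - q) i Im h`,
which is injective for `p ≠ q`, so `g (1 + z) - g z` takes its value `1` at `0` nowhere else
near `0`.
-/

open Complex ComplexConjugate Filter Topology

theorem abs_sub_mul_norm_le_norm_add_mul_conj {a b : ℝ} (ha : 0 ≤ a) (hb : 0 ≤ b) (z : ℂ) :
    |a - b| * ‖z‖ ≤ ‖(a : ℂ) * z + b * conj z‖ := by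
  rw [← sq_le_sq₀ (by positivity) (by positivity), mul_pow, sq_abs, Complex.sq_norm,
    Complex.sq_norm, normSq_apply, normSq_apply]
  simp only [add_re, add_im, mul_re, mul_im, conj_re, conj_im, ofReal_re, ofReal_im]
  nlinarith [mul_nonneg (mul_nonneg ha hb) (sq_nonneg z.re)]

theorem antilipschitzWith_smul_id_add_smul_conj {a b : ℝ} (ha : 0 ≤ a) (hb : 0 ≤ b)
    (hab : a ≠ b) :
    AntilipschitzWith (Real.toNNReal |a - b|⁻¹)
      ((a : ℂ) • ContinuousLinearMap.id ℝ ℂ + (b : ℂ) • (conjCLE : ℂ →L[ℝ] ℂ)) := by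
  have hab' : 0 < |a - b| := abs_pos.2 (sub_ne_zero.2 hab)
  refine ContinuousLinearMap.antilipschitz_of_bound _ fun z ↦ ?_
  rw [Real.coe_toNNReal _ (by positivity), inv_mul_eq_div, le_div_iff₀' hab']
  simpa using abs_sub_mul_norm_le_norm_add_mul_conj ha hb z

theorem hasFDerivAt_pow_mul_conj_pow (p q : ℕ) (w : ℂ) :
    HasFDerivAt (fun z : ℂ ↦ z ^ p * conj z ^ q)
      ((p * w ^ (p - 1) * conj w ^ q : ℂ) • ContinuousLinearMap.id ℝ ℂ +
        (q * w ^ p * conj w ^ (q - 1) : ℂ) • (conjCLE : ℂ →L[ℝ] ℂ)) w := by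
  have h : HasFDerivAt (fun z : ℂ ↦ z ^ p * conj z ^ q) _ w :=
    ((hasFDerivAt_id (𝕜 := ℝ) w).pow p).mul (conjCLE.hasFDerivAt.pow q)
  refine h.congr_fderiv ?_
  ext v
  simp only [id_eq, ContinuousAlgEquiv.coeCLE_apply, conjCAE_apply, nsmul_eq_mul, add_apply,
    smul_apply, ContinuousLinearEquiv.coe_coe, smul_eq_mul, ContinuousLinearMap.id_apply]
  ring

/-- for positive integers `p ≠ q`, the origin is an isolated zero of
`f(z) = (1 + z)^p (1 + conj z)^q − 1 − z^p (conj z)^q`. -/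
theorem stmt7 (p q : ℕ) (hp : 0 < p) (hq : 0 < q) (hpq : p ≠ q) :
    ∃ ε > (0 : ℝ), ∀ z : ℂ, 0 < ‖z‖ → ‖z‖ < ε →
      (1 + z) ^ p * (1 + conj z) ^ q ≠ 1 + z ^ p * (conj z) ^ q := by
  set g : ℂ → ℂ := fun z ↦ z ^ p * conj z ^ q
  have hg₁ : HasFDerivAt (fun z ↦ g (1 + z))
      ((p : ℂ) • ContinuousLinearMap.id ℝ ℂ + (q : ℂ) • (conjCLE : ℂ →L[ℝ] ℂ)) 0 :=
    (hasFDerivAt_comp_add_left 1).2 (by simpa using hasFDerivAt_pow_mul_conj_pow p q 1)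
  have hg₀ : HasFDerivAt g (0 : ℂ →L[ℝ] ℂ) 0 :=
    (hasFDerivAt_pow_mul_conj_pow p q 0).congr_fderiv (by
      ext v; simp [zero_pow hp.ne', zero_pow hq.ne'])
  have hinj := antilipschitzWith_smul_id_add_smul_conj (Nat.cast_nonneg p) (Nat.cast_nonneg q)
    (Nat.cast_injective.ne hpq)
  have hne : ∀ᶠ z in 𝓝[≠] (0 : ℂ), g (1 + z) - g z ≠ 1 :=
    (hg₁.sub hg₀).eventually_ne ⟨_, by simpa using hinj⟩
  obtain ⟨ε, hε, hball⟩ := Metric.eventually_nhds_iff.1 (eventually_nhdsWithin_iff.1 hne)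
  refine ⟨ε, hε, fun z hz₀ hzε heq ↦ hball (by simpa using hzε) (by simpa using hz₀) ?_⟩
  simp [g, heq]
end

section
/- Let N be a natural number and let h : ℝ × ℂ → ℂ satisfy: h(0, z) = 0 for all z ∈ ℂ; for every s ∈ ℝ the function z ↦ h(s, z) is a polynomial of degree at most N; for every z ∈ ℂ the function s ↦ h(s, z) is differentiable at s = 0; and the cocycle relation h(s₁ + s₂, z) = h(s₂, z) + h(s₁, z + i·s₂) holds for all s₁, s₂ ∈ ℝ and z ∈ ℂ. Then there exists a polynomial q : ℂ → ℂ such that h(s, z) = q(z + i·s) − q(z) for all s ∈ ℝ and z ∈ ℂ. -/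
open Complex Polynomial Finset

/-!
Differentiating the cocycle relation in `s₁` at `s₁ = 0` gives `∂ₛ h(s, z) = g(z + i s)` with
`g = ∂ₛ h(0, ·)`. Each `h(s, ·)` is the Lagrange interpolant of its values at `0, …, N`, so `g` is
again a polynomial. If `q' = -i g`, then `s ↦ q(z + i s) - q(z)` has the same derivative as
`s ↦ h(s, z)` and also vanishes at `s = 0`, so the two coincide.
-/

theorem Polynomial.exists_derivative_eq {K : Type*} [Field K] [CharZero K] (p : K[X]) :
    ∃ q : K[X], derivative q = p := by
  induction p using Polynomial.induction_on' with
  | add p p' hp hp' =>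
    obtain ⟨q, rfl⟩ := hp
    obtain ⟨q', rfl⟩ := hp'
    exact ⟨q + q', derivative_add⟩
  | monomial n a =>
    refine ⟨monomial (n + 1) (a / (n + 1)), ?_⟩
    rw [derivative_monomial, Nat.add_sub_cancel, Nat.cast_add_one,
      div_mul_cancel₀ _ (Nat.cast_add_one_ne_zero n)]

theorem Lagrange.eval_eq_sum_basis_mul_eval {F ι : Type*} [Field F] [DecidableEq ι]
    {s : Finset ι} {v : ι → F} (hvs : Set.InjOn v s) {p : F[X]} (hp : p.degree < #s) (z : F) :
    p.eval z = ∑ i ∈ s, (Lagrange.basis s v i).eval z * p.eval (v i) := by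
  conv_lhs => rw [Lagrange.eq_interpolate hvs hp]
  simp only [Lagrange.interpolate_apply, eval_finsetSum, eval_mul, eval_C, mul_comm]

theorem exists_polynomial_hasDerivAt_of_natDegree_le {𝕜 K : Type*} [NontriviallyNormedField 𝕜]
    [NormedField K] [CharZero K] [NormedAlgebra 𝕜 K] {N : ℕ} {f : 𝕜 → K → K} {s₀ : 𝕜}
    (hpoly : ∀ s, ∃ p : K[X], p.natDegree ≤ N ∧ ∀ z, f s z = p.eval z)
    (hdiff : ∀ z, DifferentiableAt 𝕜 (fun s => f s z) s₀) :
    ∃ P : K[X], ∀ z, HasDerivAt (fun s => f s z) (P.eval z) s₀ := by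
  let nodes := range (N + 1)
  let L : ℕ → K[X] := Lagrange.basis nodes Nat.cast
  have hinterp : ∀ s z, f s z = ∑ j ∈ nodes, (L j).eval z * f s j := by
    intro s z
    obtain ⟨p, hdeg, hp⟩ := hpoly s
    have hdeg' : p.degree < #nodes := by
      rw [card_range]
      exact (degree_le_natDegree).trans_lt (by exact_mod_cast Nat.lt_succ_of_le hdeg)
    simp only [hp]
    exact Lagrange.eval_eq_sum_basis_mul_eval (fun _ _ _ _ h => Nat.cast_injective h) hdeg' z
  refine ⟨∑ j ∈ nodes, C (deriv (fun s => f s j) s₀) * L j, fun z => ?_⟩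
  have hsum := HasDerivAt.fun_sum (u := nodes) fun j _ =>
    (hdiff j).hasDerivAt.const_mul ((L j).eval z)
  simp only [← hinterp] at hsum
  simpa [eval_finsetSum, mul_comm] using hsum

theorem hasDerivAt_of_cocycle {X E : Type*} [NormedAddCommGroup E] [NormedSpace ℝ E]
    {τ : ℝ → X → X} {h : ℝ → X → E} {g : X → E}
    (hcoc : ∀ s₁ s₂ z, h (s₁ + s₂) z = h s₂ z + h s₁ (τ s₂ z))
    (hg : ∀ w, HasDerivAt (fun s => h s w) (g w) 0) (s : ℝ) (z : X) :
    HasDerivAt (fun t => h t z) (g (τ s z)) s := by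
  have hshift : (fun t => h t z) = fun t => h s z + h (t - s) (τ s z) := by
    funext t
    rw [← hcoc, sub_add_cancel]
  rw [hshift]
  have hshifted : HasDerivAt (fun t => h (t - s) (τ s z)) (g (τ s z)) s :=
    HasDerivAt.comp_sub_const (f := fun t => h t (τ s z)) s s (by rw [sub_self]; exact hg _)
  exact hshifted.const_add _

theorem Polynomial.hasDerivAt_eval_add_mul_ofReal (q : ℂ[X]) (z c : ℂ) (t : ℝ) :
    HasDerivAt (fun t : ℝ => q.eval (z + c * t)) (c * q.derivative.eval (z + c * t)) t := by
  have hline : HasDerivAt (fun w : ℂ => z + c * w) c t := by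
    simpa using ((hasDerivAt_id (t : ℂ)).const_mul c).const_add z
  simpa [mul_comm] using ((q.hasDerivAt _).comp (t : ℂ) hline).comp_ofReal

theorem eq_of_hasDerivAt_eq {E : Type*} [NormedAddCommGroup E] [NormedSpace ℝ E]
    {f g f' : ℝ → E} (hf : ∀ t, HasDerivAt f (f' t) t) (hg : ∀ t, HasDerivAt g (f' t) t)
    (t₀ : ℝ) (h₀ : f t₀ = g t₀) : f = g :=
  eq_of_fderiv_eq (fun t => (hf t).differentiableAt) (fun t => (hg t).differentiableAt)
    (fun t => by rw [(hf t).hasFDerivAt.fderiv, (hg t).hasFDerivAt.fderiv]) t₀ h₀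

/-- a cocycle `h : ℝ × ℂ → ℂ` with `h(0,·) = 0`, polynomial of degree `≤ N`
in the second variable, differentiable at `s = 0` in the first variable, and satisfying
`h(s₁+s₂, z) = h(s₂, z) + h(s₁, z + i s₂)`, has the form `h(s,z) = q(z + i s) − q(z)`
for a polynomial `q`. -/
theorem stmt9 (N : ℕ) (h : ℝ → ℂ → ℂ)
    (h0 : ∀ z : ℂ, h 0 z = 0)
    (hpoly : ∀ s : ℝ, ∃ p : Polynomial ℂ, p.natDegree ≤ N ∧ ∀ z : ℂ, h s z = p.eval z)
    (hdiff : ∀ z : ℂ, DifferentiableAt ℝ (fun s : ℝ => h s z) 0)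
    (hcoc : ∀ s₁ s₂ : ℝ, ∀ z : ℂ, h (s₁ + s₂) z = h s₂ z + h s₁ (z + Complex.I * s₂)) :
    ∃ q : Polynomial ℂ, ∀ s : ℝ, ∀ z : ℂ,
      h s z = q.eval (z + Complex.I * s) - q.eval z := by
  obtain ⟨P, hP⟩ := exists_polynomial_hasDerivAt_of_natDegree_le hpoly hdiff
  obtain ⟨q, hq⟩ := (C (-I) * P).exists_derivative_eq
  refine ⟨q, fun s z => ?_⟩
  have hlhs (t : ℝ) : HasDerivAt (fun t => h t z) (P.eval (z + I * t)) t :=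
    hasDerivAt_of_cocycle hcoc hP t z
  have hrhs (t : ℝ) :
      HasDerivAt (fun t : ℝ => q.eval (z + I * t) - q.eval z) (P.eval (z + I * t)) t := by
    have hI : I * -I = 1 := by rw [mul_neg, I_mul_I, neg_neg]
    simpa [hq, ← mul_assoc, hI] using
      (q.hasDerivAt_eval_add_mul_ofReal z I t).sub_const (q.eval z)
  exact congrFun (eq_of_hasDerivAt_eq hlhs hrhs 0 (by simp [h0])) s
end

section
/- Let c : ℕ × ℕ → ℂ be finitely supported and not identically zero, and set P(z) = Σ_{j,q} c_{j,q} z^j (conj z)^q for z ∈ ℂ. Let α be a nonzero real number and β ∈ ℂ, and suppose that P(exp(β·s)·z) = exp(α·s)·P(z) for all s ∈ ℝ and all z ∈ ℂ. Then there is a positive integer k such that α = k·Re β and P is homogeneous of degree k, i.e. c_{j,q} = 0 whenever j + q ≠ k. -/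
open Complex ComplexConjugate Finset

/-!
Taking `s = 1`, the monomial `z^j (conj z)^q` is scaled by `e^{βj} e^{conj β q}`, so by linear
independence of these monomials every `c_{j,q} ≠ 0` satisfies `e^{βj + conj β q} = e^α`; taking
absolute values, `(j + q) Re β = α`. As `α ≠ 0`, `Re β ≠ 0` and all these `j + q` agree.

Linear independence: substituting `z = x + iy`, `conj z = x - iy` turns `Σ c_{j,q} z^j w^q` into a
polynomial in `(x, y)` vanishing on `ℝ²`, hence identically zero; undoing the (invertible)
substitution over `ℂ` shows that `Σ c_{j,q} z^j w^q` vanishes on `ℂ²`.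
-/

namespace MvPolynomial

theorem eq_zero_of_eval_ofReal_eq_zero {σ : Type*} {p : MvPolynomial σ ℂ}
    (h : ∀ x : σ → ℝ, eval (fun i ↦ (x i : ℂ)) p = 0) : p = 0 :=
  funext_set (fun _ ↦ Set.range ofReal)
    (fun _ ↦ Set.infinite_range_of_injective ofReal_injective) fun x hx ↦ by
      choose y hy using fun i ↦ hx i (Set.mem_univ i)
      rw [← _root_.funext hy, h y, map_zero]

theorem eval_bind₁_add_I_mul_sub_I_mul (p : MvPolynomial (Fin 2) ℂ) (x : Fin 2 → ℂ) :
    eval x (bind₁ ![X 0 + C I * X 1, X 0 - C I * X 1] p) =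
      eval ![x 0 + I * x 1, x 0 - I * x 1] p := by
  rw [eval, eval₂Hom_bind₁]
  congr 2
  ext i
  fin_cases i <;> simp

end MvPolynomial

open MvPolynomial

noncomputable def bipoly {R : Type*} [CommSemiring R] (n : ℕ) (a : ℕ → ℕ → R) :
    MvPolynomial (Fin 2) R :=
  ∑ j ∈ range n, ∑ q ∈ range n, monomial (Finsupp.single 0 j + Finsupp.single 1 q) (a j q)

section bipoly

variable {R : Type*} [CommSemiring R] (n : ℕ) (a : ℕ → ℕ → R)

theorem eval_bipoly (x : Fin 2 → R) :
    eval x (bipoly n a) = ∑ j ∈ range n, ∑ q ∈ range n, a j q * x 0 ^ j * x 1 ^ q := by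
  simp [bipoly, eval_monomial, Finsupp.prod_add_index, pow_add, mul_assoc]

theorem coeff_bipoly {j q : ℕ} (hj : j < n) (hq : q < n) :
    coeff (Finsupp.single 0 j + Finsupp.single 1 q) (bipoly n a) = a j q := by
  have single_add_single_inj : ∀ j' q' : ℕ,
      Finsupp.single (0 : Fin 2) j' + Finsupp.single 1 q' =
        Finsupp.single 0 j + Finsupp.single 1 q ↔ j' = j ∧ q' = q := by
    refine fun j' q' ↦ ⟨fun h ↦ ?_, by rintro ⟨rfl, rfl⟩; rfl⟩
    have h0 := DFunLike.congr_fun h 0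
    have h1 := DFunLike.congr_fun h 1
    simp only [Finsupp.add_apply, Finsupp.single_apply] at h0 h1
    simp_all
  simp [bipoly, coeff_sum, coeff_monomial, single_add_single_inj, ite_and, hj, hq]

end bipoly

noncomputable def conjPoly (n : ℕ) (a : ℕ → ℕ → ℂ) (z : ℂ) : ℂ :=
  ∑ j ∈ range n, ∑ q ∈ range n, a j q * z ^ j * conj z ^ q

section conjPoly

variable {n : ℕ} {a : ℕ → ℕ → ℂ}

theorem conjPoly_mul_sub_mul (w r z : ℂ) :
    conjPoly n (fun j q ↦ a j q * (w ^ j * conj w ^ q - r)) z =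
      conjPoly n a (w * z) - r * conjPoly n a z := by
  simp only [conjPoly, mul_sum, ← sum_sub_distrib, map_mul]
  refine sum_congr rfl fun j _ ↦ sum_congr rfl fun q _ ↦ ?_
  ring

theorem eq_zero_of_conjPoly_eq_zero (h : ∀ z, conjPoly n a z = 0) {j q : ℕ}
    (hj : j < n) (hq : q < n) : a j q = 0 := by
  have hreal : bind₁ (![X 0 + C I * X 1, X 0 - C I * X 1] : Fin 2 → MvPolynomial (Fin 2) ℂ)
      (bipoly n a) = 0 := by
    refine eq_zero_of_eval_ofReal_eq_zero fun x ↦ ?_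
    rw [eval_bind₁_add_I_mul_sub_I_mul, eval_bipoly]
    simpa [conjPoly, conj_ofReal, sub_eq_add_neg] using h (x 0 + I * x 1)
  have hzero : bipoly n a = 0 := MvPolynomial.funext fun w ↦ by
    have hw : ![(w 0 + w 1) / 2 + I * ((w 0 - w 1) / (2 * I)),
        (w 0 + w 1) / 2 - I * ((w 0 - w 1) / (2 * I))] = w := by
      ext i
      fin_cases i <;> simp <;> field_simp <;> ring
    have := congrArg (eval ![(w 0 + w 1) / 2, (w 0 - w 1) / (2 * I)]) hreal
    rwa [eval_bind₁_add_I_mul_sub_I_mul, map_zero, Matrix.cons_val_zero, Matrix.cons_val_one,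
      Matrix.cons_val_zero, hw] at this
  rw [← coeff_bipoly n a hj hq, hzero, coeff_zero]

theorem pow_mul_conj_pow_eq_of_conjPoly_mul {w r : ℂ}
    (h : ∀ z, conjPoly n a (w * z) = r * conjPoly n a z) {j q : ℕ} (hj : j < n) (hq : q < n)
    (hc : a j q ≠ 0) : w ^ j * conj w ^ q = r := by
  have := eq_zero_of_conjPoly_eq_zero (a := fun j q ↦ a j q * (w ^ j * conj w ^ q - r))
    (fun z ↦ by rw [conjPoly_mul_sub_mul, h, sub_self]) hj hq
  exact sub_eq_zero.mp ((mul_eq_zero.mp this).resolve_left hc)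

end conjPoly

theorem add_mul_re_eq_of_exp_pow_mul_conj_pow {β : ℂ} {α : ℝ} {j q : ℕ}
    (h : exp β ^ j * conj (exp β) ^ q = (Real.exp α : ℂ)) : ((j + q : ℕ) : ℝ) * β.re = α := by
  have hnorm := congrArg norm h
  rw [norm_mul, norm_pow, norm_pow, Complex.norm_conj, norm_exp, ← pow_add, ← Real.exp_nat_mul,
    norm_real, Real.norm_of_nonneg (Real.exp_pos α).le] at hnorm
  exact Real.exp_injective hnorm

/-- if `P(z) = Σ c_{j,q} z^j conj(z)^q` is a nonzero polynomial in `z` and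
`conj z`, `α ≠ 0` is real, `β ∈ ℂ`, and `P(e^{βs} z) = e^{αs} P(z)` for all real `s` and
all `z`, then `α = k Re β` for some `k ≥ 1` and `P` is homogeneous of degree `k`. -/
theorem stmt13 (c : ℕ → ℕ → ℂ) (N : ℕ)
    (hsupp : ∀ j q, N < j ∨ N < q → c j q = 0)
    (hne : ∃ j q, c j q ≠ 0)
    (P : ℂ → ℂ)
    (hP : ∀ z : ℂ, P z = ∑ j ∈ Finset.range (N + 1), ∑ q ∈ Finset.range (N + 1),
      c j q * z ^ j * (conj z) ^ q)
    (α : ℝ) (hα : α ≠ 0) (β : ℂ)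
    (heq : ∀ s : ℝ, ∀ z : ℂ,
      P (Complex.exp (β * s) * z) = (Real.exp (α * s) : ℂ) * P z) :
    ∃ k : ℕ, 0 < k ∧ α = k * β.re ∧ ∀ j q : ℕ, j + q ≠ k → c j q = 0 := by
  have hPc : P = conjPoly (N + 1) c := _root_.funext hP
  have hdeg : ∀ j q, c j q ≠ 0 → ((j + q : ℕ) : ℝ) * β.re = α := fun j q hc ↦ by
    have hj : j < N + 1 := Nat.lt_succ_of_le (not_lt.mp fun h ↦ hc (hsupp j q (.inl h)))
    have hq : q < N + 1 := Nat.lt_succ_of_le (not_lt.mp fun h ↦ hc (hsupp j q (.inr h)))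
    refine add_mul_re_eq_of_exp_pow_mul_conj_pow (pow_mul_conj_pow_eq_of_conjPoly_mul
      (fun z ↦ ?_) hj hq hc)
    simpa [hPc] using heq 1 z
  obtain ⟨j₀, q₀, hc₀⟩ := hne
  have hk := hdeg j₀ q₀ hc₀
  have hre : β.re ≠ 0 := fun h ↦ hα (by rw [← hk, h, mul_zero])
  refine ⟨j₀ + q₀, Nat.pos_of_ne_zero fun h ↦ hα ?_, hk.symm, fun j q hjq ↦ ?_⟩
  · rw [← hk, h, Nat.cast_zero, zero_mul]
  · by_contra hc
    exact hjq (by exact_mod_cast mul_right_cancel₀ hre ((hdeg j q hc).trans hk.symm))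
end
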